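/- arXiv:math/0301326 — 4 statements merged into one kernel-verified Lean document; each statement's English description precedes it below -/
import Mathlib

section
/- Let (g,σ,B) be an indecomposable solvable symmetric triple with g = h ⊕ m and an adapted decomposition m = z ⊕ W ⊕ z* with maximal center (z = z(g)). Then the Lie algebra g is nilpotent if and only if ⁅z*, ⁅z*, W⁆⁆ ⊆ z. In particular, if W = 0 then g is nilpotent. -/
/-!
For `a ∈ z*` the operator `q = (ad a)²` is `B`-self-adjoint, kills `z` and maps `W` into `z ⊕ W`.
If `g` is nilpotent, so is `q`; writing `qⁿ w = ζ + u` with `u ∈ W`, one gets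
`B u u = B w (qⁿ u)`, which vanishes as soon as `q^(n+1) W ⊆ z`, so by descending induction
`q W ⊆ z`. Polarising `⁅a, ⁅a, W⁆⁆ ⊆ z`, using `⁅⁅a, b⁆, W⁆ ⊆ ⁅h, W⁆ ⊆ z`, gives the condition.

Conversely, let `P = {p ∈ h | ⁅p, m⁆ ⊆ z}`. By invariance of `B`, `⁅W, W⁆ = 0` always, and
under the condition `⁅z*, W⁆ ⊆ P`; moreover `⁅h, h⁆ ⊆ P` and, since `h` acts faithfully on `m`,
`⁅h, P⁆ = 0`. Hence `g ⊇ h + z + W ⊇ P + z + W ⊇ P + z ⊇ z ⊇ 0` is a central series.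
-/

open LieAlgebra LinearMap

section LieBracket

variable {R L : Type*} [CommRing R] [LieRing L] [LieAlgebra R L]

theorem lie_mem_of_mem_sup_left {S T U : Submodule R L} {x y : L} (hx : x ∈ S ⊔ T)
    (hS : ∀ s ∈ S, ⁅s, y⁆ ∈ U) (hT : ∀ t ∈ T, ⁅t, y⁆ ∈ U) : ⁅x, y⁆ ∈ U := by
  obtain ⟨s, hs, t, ht, rfl⟩ := Submodule.mem_sup.1 hx
  rw [add_lie]
  exact U.add_mem (hS s hs) (hT t ht)

theorem lie_mem_of_mem_sup_right {S T U : Submodule R L} {x y : L} (hy : y ∈ S ⊔ T)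
    (hS : ∀ s ∈ S, ⁅x, s⁆ ∈ U) (hT : ∀ t ∈ T, ⁅x, t⁆ ∈ U) : ⁅x, y⁆ ∈ U := by
  obtain ⟨s, hs, t, ht, rfl⟩ := Submodule.mem_sup.1 hy
  rw [lie_add]
  exact U.add_mem (hS s hs) (hT t ht)

theorem lie_mem_of_lie_mem_swap {U : Submodule R L} {x y : L} (h : ⁅y, x⁆ ∈ U) :
    ⁅x, y⁆ ∈ U := by
  rw [← lie_skew]
  exact U.neg_mem h

theorem lie_eq_zero_of_mem_center {z : L} (hz : z ∈ center R L) (x : L) : ⁅x, z⁆ = 0 :=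
  (LieModule.mem_maxTrivSubmodule R L L z).1 hz x

theorem lie_mem_of_mem_center {U : Submodule R L} {z : L} (hz : z ∈ center R L) (x : L) :
    ⁅x, z⁆ ∈ U :=
  lie_eq_zero_of_mem_center hz x ▸ U.zero_mem

def lieTransporter (M N : Submodule R L) : Submodule R L where
  carrier := {x | ∀ m ∈ M, ⁅x, m⁆ ∈ N}
  add_mem' hx hy m hm := by
    rw [add_lie]
    exact N.add_mem (hx m hm) (hy m hm)
  zero_mem' m _ := by
    rw [zero_lie]
    exact N.zero_mem
  smul_mem' c x hx m hm := by
    rw [smul_lie]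
    exact N.smul_mem c (hx m hm)

theorem toSubmodule_lowerCentralSeries_succ_le {S T : Submodule R L} {k : ℕ}
    (hk : (LieModule.lowerCentralSeries R L L k).toSubmodule ≤ S)
    (hST : ∀ x : L, ∀ y ∈ S, ⁅x, y⁆ ∈ T) :
    (LieModule.lowerCentralSeries R L L (k + 1)).toSubmodule ≤ T := by
  rw [LieModule.lowerCentralSeries_succ, LieSubmodule.lieIdeal_oper_eq_linear_span']
  exact Submodule.span_le.2 fun _ ⟨x, _, y, hy, hxy⟩ => hxy ▸ hST x y (hk hy)

theorem lie_lie_mem_of_lie_lie_self_mem {K : Type*} [Field K] [CharZero K] [LieAlgebra K L]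
    {S U : Submodule K L} {y : L}
    (hself : ∀ a ∈ S, ⁅a, ⁅a, y⁆⁆ ∈ U) (hcomm : ∀ a ∈ S, ∀ b ∈ S, ⁅⁅a, b⁆, y⁆ ∈ U)
    {a b : L} (ha : a ∈ S) (hb : b ∈ S) : ⁅a, ⁅b, y⁆⁆ ∈ U := by
  have key : (2 : K) • ⁅a, ⁅b, y⁆⁆ =
      ⁅a + b, ⁅a + b, y⁆⁆ - ⁅a, ⁅a, y⁆⁆ - ⁅b, ⁅b, y⁆⁆ + ⁅⁅a, b⁆, y⁆ := by
    rw [lie_lie, two_smul]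
    simp only [add_lie, lie_add]
    abel
  rw [← U.smul_mem_iff (two_ne_zero : (2 : K) ≠ 0), key]
  exact U.add_mem (U.sub_mem (U.sub_mem (hself _ (S.add_mem ha hb)) (hself a ha)) (hself b hb))
    (hcomm a ha b hb)

end LieBracket

section SelfAdjoint

variable {R V : Type*} [CommRing R] [AddCommGroup V] [Module R V] {B : LinearMap.BilinForm R V}

theorem LinearMap.IsSelfAdjoint.pow {q : Module.End R V} (hq : B.IsSelfAdjoint q) (n : ℕ) :
    B.IsSelfAdjoint ⇑(q ^ n) := by
  induction n with
  | zero => exact isAdjointPair_one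
  | succ n ih =>
    have := ih.mul hq
    rwa [← pow_succ, ← pow_succ'] at this

theorem apply_mem_of_isSelfAdjoint_of_isNilpotent {q : Module.End R V} {Z W : Submodule R V}
    (hB : B.IsSymm) (hq : B.IsSelfAdjoint q) (hnil : IsNilpotent q) (hZ : ∀ z ∈ Z, q z = 0)
    (hW : ∀ w ∈ W, q w ∈ Z ⊔ W) (hWZ : ∀ w ∈ W, ∀ z ∈ Z, B w z = 0)
    (hWaniso : ∀ w ∈ W, B w w = 0 → w = 0) {w : V} (hw : w ∈ W) : q w ∈ Z := by
  have hpowZ : ∀ n, ∀ z ∈ Z, (q ^ (n + 1)) z = 0 := fun n z hz => by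
    rw [pow_succ, Module.End.mul_apply, hZ z hz, map_zero]
  have hpowZW : ∀ n, ∀ x ∈ Z ⊔ W, (q ^ n) x ∈ Z ⊔ W := fun n =>
    Module.End.pow_apply_mem_of_forall_mem n fun x hx => by
      obtain ⟨z, hz, u, hu, rfl⟩ := Submodule.mem_sup.1 hx
      rw [map_add, hZ z hz, zero_add]
      exact hW u hu
  have step : ∀ n, (∀ w ∈ W, (q ^ (n + 2)) w ∈ Z) → ∀ w ∈ W, (q ^ (n + 1)) w ∈ Z := by
    intro n h w hw
    obtain ⟨z, hz, u, hu, hzu⟩ :=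
      Submodule.mem_sup.1 (hpowZW (n + 1) w (Submodule.mem_sup_right hw))
    have hu' : u = (q ^ (n + 1)) w - z := eq_sub_of_add_eq' hzu
    have hqu : (q ^ (n + 1)) u ∈ Z := by
      have : (q ^ (n + 1)) u = (q ^ n) ((q ^ (n + 2)) w) := by
        rw [hu', map_sub, hpowZ n z hz, sub_zero, ← Module.End.mul_apply, ← pow_add,
          ← Module.End.mul_apply, ← pow_add]
        ring_nf
      rw [this]
      exact Module.End.pow_apply_mem_of_forall_mem n (fun z hz => hZ z hz ▸ Z.zero_mem) _ (h w hw)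
    have huu : B u u = 0 := by
      nth_rw 1 [hu']
      rw [map_sub, LinearMap.sub_apply, hq.pow, hB.eq z u, hWZ w hw _ hqu, hWZ u hu z hz,
        sub_zero]
    rw [← hzu, hWaniso u hu huu, add_zero]
    exact hz
  obtain ⟨N, hN⟩ := hnil
  have hlarge : ∀ w ∈ W, (q ^ (N + 1)) w ∈ Z := fun w _ => by
    rw [pow_succ, hN, zero_mul, LinearMap.zero_apply]
    exact Z.zero_mem
  have hdescend : ∀ j, (∀ w ∈ W, (q ^ (j + 1)) w ∈ Z) → ∀ w ∈ W, (q ^ 1) w ∈ Z := by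
    intro j
    induction j with
    | zero => exact id
    | succ j ih => exact fun h => ih (step j h)
  simpa using hdescend N hlarge w hw

end SelfAdjoint

section InvariantForm

variable {R L : Type*} [CommRing R] [LieRing L] [LieAlgebra R L] {B : LinearMap.BilinForm R L}

theorem isAdjointPair_ad_neg_ad (hB : ∀ x y z : L, B ⁅x, y⁆ z = B x ⁅y, z⁆) (a : L) :
    IsAdjointPair B B (ad R L a) ⇑(-ad R L a) := fun x y => by
  rw [LinearMap.neg_apply, ad_apply, ad_apply, ← lie_skew, map_neg, LinearMap.neg_apply, hB,
    map_neg]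

theorem isSelfAdjoint_ad_sq (hB : ∀ x y z : L, B ⁅x, y⁆ z = B x ⁅y, z⁆) (a : L) :
    B.IsSelfAdjoint ⇑(ad R L a ^ 2) := by
  have := (isAdjointPair_ad_neg_ad hB a).mul (isAdjointPair_ad_neg_ad hB a)
  rwa [neg_mul_neg, ← sq] at this

end InvariantForm

section Involution

variable {K L : Type*} [Field K] [LieRing L] [LieAlgebra K L] {σ : L →ₗ⁅K⁆ L} {H M : Submodule K L}

theorem lie_mem_of_mem_fixed (hH : ∀ x, x ∈ H ↔ σ x = x) {x y : L} (hx : x ∈ H) (hy : y ∈ H) :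
    ⁅x, y⁆ ∈ H := by
  rw [hH, LieHom.map_lie, (hH x).1 hx, (hH y).1 hy]

theorem lie_mem_of_mem_antifixed (hH : ∀ x, x ∈ H ↔ σ x = x) (hM : ∀ x, x ∈ M ↔ σ x = -x)
    {x y : L} (hx : x ∈ M) (hy : y ∈ M) : ⁅x, y⁆ ∈ H := by
  rw [hH, LieHom.map_lie, (hM x).1 hx, (hM y).1 hy, neg_lie, lie_neg, neg_neg]

theorem apply_eq_zero_of_isOrthogonal [CharZero K] {V : Type*} [AddCommGroup V] [Module K V]
    {B : LinearMap.BilinForm K V} {f : V → V} (hf : B.IsOrthogonal f) {x y : V}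
    (hx : f x = x) (hy : f y = -y) : B x y = 0 := by
  have := hf x y
  rwa [hx, hy, map_neg, eq_comm, self_eq_neg] at this

end Involution

section Nondegenerate

variable {K L : Type*} [Field K] [LieRing L] [LieAlgebra K L] {B : LinearMap.BilinForm K L}
  {H M : Submodule K L}

theorem eq_zero_of_apply_eq_zero_of_sup_eq_top (hBnd : B.Nondegenerate) (htop : H ⊔ M = ⊤)
    {x : L} (hxH : ∀ h ∈ H, B x h = 0) (hxM : ∀ m ∈ M, B x m = 0) : x = 0 := by
  refine hBnd.1 x fun y => ?_
  obtain ⟨h, hh, m, hm, rfl⟩ := Submodule.mem_sup.1 (htop ▸ Submodule.mem_top : y ∈ H ⊔ M)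
  rw [map_add, hxH h hh, hxM m hm, add_zero]

theorem eq_zero_of_forall_lie_eq_zero (hBnd : B.Nondegenerate)
    (hBad : ∀ x y z : L, B ⁅x, y⁆ z = B x ⁅y, z⁆) (htop : H ⊔ M = ⊤)
    (hHspan : H = Submodule.span K {z : L | ∃ x ∈ M, ∃ y ∈ M, ⁅x, y⁆ = z})
    (horth : ∀ h ∈ H, ∀ m ∈ M, B h m = 0) {u : L} (hu : u ∈ H) (huM : ∀ m ∈ M, ⁅u, m⁆ = 0) :
    u = 0 := by
  refine eq_zero_of_apply_eq_zero_of_sup_eq_top hBnd htop (fun h hh => ?_) (horth u hu)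
  have hle : H ≤ LinearMap.ker (B u) := by
    rw [hHspan, Submodule.span_le]
    rintro _ ⟨x, hx, y, _, rfl⟩
    rw [SetLike.mem_coe, LinearMap.mem_ker, ← hBad, huM x hx, map_zero, LinearMap.zero_apply]
  exact hle hh

end Nondegenerate

section Adapted

variable {K L : Type*} [Field K] [LieRing L] [LieAlgebra K L] {B : LinearMap.BilinForm K L}
  {H M W Zstar : Submodule K L}

local notation "𝔷" => LieSubmodule.toSubmodule (LieAlgebra.center K L)

theorem lie_mem_center_sup_W (hsum : 𝔷 ⊔ W ⊔ Zstar = M)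
    (hbr₁ : ∀ h ∈ H, ∀ x ∈ 𝔷 ⊔ W, ⁅h, x⁆ ∈ 𝔷) (hbr₂ : ∀ h ∈ H, ∀ x ∈ Zstar, ⁅h, x⁆ ∈ 𝔷 ⊔ W)
    {h m : L} (hh : h ∈ H) (hm : m ∈ M) : ⁅h, m⁆ ∈ 𝔷 ⊔ W :=
  lie_mem_of_mem_sup_right (hsum ▸ hm) (fun x hx => Submodule.mem_sup_left (hbr₁ h hh x hx))
    (hbr₂ h hh)

theorem lie_W_eq_zero_of_lie_Zstar_mem_center (hB : B.IsSymm)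
    (hBad : ∀ x y z : L, B ⁅x, y⁆ z = B x ⁅y, z⁆)
    (hWZ : ∀ w ∈ W, ∀ z ∈ LieAlgebra.center K L, B w z = 0)
    (hpair₁ : ∀ a ∈ LieAlgebra.center K L, (∀ b ∈ Zstar, B a b = 0) → a = 0)
    (hbr₁ : ∀ h ∈ H, ∀ x ∈ 𝔷 ⊔ W, ⁅h, x⁆ ∈ 𝔷) {u w : L} (hu : u ∈ H)
    (huZstar : ∀ a ∈ Zstar, ⁅u, a⁆ ∈ 𝔷) (hw : w ∈ W) : ⁅u, w⁆ = 0 := by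
  refine hpair₁ _ (hbr₁ u hu w (Submodule.mem_sup_right hw)) fun a ha => ?_
  -- `B ⁅u, w⁆ a = -B ⁅u, a⁆ w = -B w ⁅u, a⁆`, and `⁅u, a⁆ ∈ z` is orthogonal to `W`
  rw [hBad, ← lie_skew, map_neg, ← hBad, hB.eq, hWZ w hw _ (huZstar a ha), neg_zero]

theorem mem_lieTransporter_of_lie_Zstar_mem_center (hB : B.IsSymm)
    (hBad : ∀ x y z : L, B ⁅x, y⁆ z = B x ⁅y, z⁆)
    (hWZ : ∀ w ∈ W, ∀ z ∈ LieAlgebra.center K L, B w z = 0)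
    (hpair₁ : ∀ a ∈ LieAlgebra.center K L, (∀ b ∈ Zstar, B a b = 0) → a = 0)
    (hbr₁ : ∀ h ∈ H, ∀ x ∈ 𝔷 ⊔ W, ⁅h, x⁆ ∈ 𝔷) (hsum : 𝔷 ⊔ W ⊔ Zstar = M) {u : L} (hu : u ∈ H)
    (huZstar : ∀ a ∈ Zstar, ⁅u, a⁆ ∈ 𝔷) : u ∈ lieTransporter M 𝔷 := fun _ hm =>
  lie_mem_of_mem_sup_right (hsum ▸ hm)
    (fun _ hx => lie_mem_of_mem_sup_right hx (fun _ hz => lie_mem_of_mem_center hz u)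
      (fun _ hw => lie_W_eq_zero_of_lie_Zstar_mem_center hB hBad hWZ hpair₁ hbr₁ hu huZstar hw ▸
        Submodule.zero_mem _))
    huZstar

theorem lie_H_H_mem_lieTransporter (hHM : ∀ h ∈ H, ∀ m ∈ M, ⁅h, m⁆ ∈ 𝔷 ⊔ W)
    (hbr₁ : ∀ h ∈ H, ∀ x ∈ 𝔷 ⊔ W, ⁅h, x⁆ ∈ 𝔷) {h h' : L} (hh : h ∈ H) (hh' : h' ∈ H) :
    ⁅h, h'⁆ ∈ lieTransporter M 𝔷 := fun m hm => by
  rw [lie_lie]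
  exact Submodule.sub_mem _ (hbr₁ h hh _ (hHM h' hh' m hm)) (hbr₁ h' hh' _ (hHM h hh m hm))

theorem lie_H_eq_zero_of_mem_lieTransporter
    (hfaith : ∀ u ∈ H, (∀ m ∈ M, ⁅u, m⁆ = 0) → u = 0) (hHH : ∀ x ∈ H, ∀ y ∈ H, ⁅x, y⁆ ∈ H)
    (hHM : ∀ h ∈ H, ∀ m ∈ M, ⁅h, m⁆ ∈ 𝔷 ⊔ W) {h p : L} (hh : h ∈ H) (hp : p ∈ H)
    (hpM : p ∈ lieTransporter M 𝔷) (hpW : ∀ w ∈ W, ⁅p, w⁆ = 0) : ⁅h, p⁆ = 0 := by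
  refine hfaith _ (hHH h hh p hp) fun m hm => ?_
  obtain ⟨z, hz, w, hw, hzw⟩ := Submodule.mem_sup.1 (hHM h hh m hm)
  rw [lie_lie, lie_eq_zero_of_mem_center (hpM m hm), ← hzw, lie_add, lie_eq_zero_of_mem_center hz,
    hpW w hw, add_zero, sub_zero]

theorem lie_W_W_eq_zero (hBnd : B.Nondegenerate)
    (hBad : ∀ x y z : L, B ⁅x, y⁆ z = B x ⁅y, z⁆) (htop : H ⊔ M = ⊤)
    (horth : ∀ h ∈ H, ∀ m ∈ M, B h m = 0) (hMM : ∀ x ∈ M, ∀ y ∈ M, ⁅x, y⁆ ∈ H) (hWM : W ≤ M)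
    (hWZ : ∀ w ∈ W, ∀ z ∈ LieAlgebra.center K L, B w z = 0)
    (hbr₁ : ∀ h ∈ H, ∀ x ∈ 𝔷 ⊔ W, ⁅h, x⁆ ∈ 𝔷) {w w' : L} (hw : w ∈ W) (hw' : w' ∈ W) :
    ⁅w, w'⁆ = 0 :=
  -- `⁅w, w'⁆ ∈ h` is orthogonal to `m`, and `B ⁅w, w'⁆ h = -B w ⁅h, w'⁆` with `⁅h, w'⁆ ∈ z`
  eq_zero_of_apply_eq_zero_of_sup_eq_top hBnd htop
    (fun h hh => by
      rw [hBad, ← lie_skew, map_neg, hWZ w hw _ (hbr₁ h hh w' (Submodule.mem_sup_right hw')),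
        neg_zero])
    (horth _ (hMM w (hWM hw) w' (hWM hw')))

theorem lie_Zstar_lie_W_mem_center_of_isNilpotent [CharZero K] [LieRing.IsNilpotent L]
    (hB : B.IsSymm) (hBad : ∀ x y z : L, B ⁅x, y⁆ z = B x ⁅y, z⁆)
    (hMM : ∀ x ∈ M, ∀ y ∈ M, ⁅x, y⁆ ∈ H) (hWM : W ≤ M) (hZstarM : Zstar ≤ M)
    (hWZ : ∀ w ∈ W, ∀ z ∈ LieAlgebra.center K L, B w z = 0)
    (hWaniso : ∀ w ∈ W, B w w = 0 → w = 0) (hbr₁ : ∀ h ∈ H, ∀ x ∈ 𝔷 ⊔ W, ⁅h, x⁆ ∈ 𝔷)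
    (hbr₂ : ∀ h ∈ H, ∀ x ∈ Zstar, ⁅h, x⁆ ∈ 𝔷 ⊔ W) {a b w : L} (ha : a ∈ Zstar) (hb : b ∈ Zstar)
    (hw : w ∈ W) : ⁅a, ⁅b, w⁆⁆ ∈ 𝔷 := by
  have hself : ∀ c ∈ Zstar, ⁅c, ⁅c, w⁆⁆ ∈ 𝔷 := fun c hc => by
    obtain ⟨k, hk⟩ := nilpotent_ad_of_nilpotent_algebra K L
    have hnil : IsNilpotent (ad K L c ^ 2) :=
      ⟨k, by rw [← pow_mul, mul_comm, pow_mul, hk c, zero_pow two_ne_zero]⟩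
    have := apply_mem_of_isSelfAdjoint_of_isNilpotent hB (isSelfAdjoint_ad_sq hBad c) hnil
      (fun z hz => by
        rw [sq, Module.End.mul_apply, ad_apply, ad_apply, lie_eq_zero_of_mem_center hz, lie_zero])
      (fun v hv => lie_mem_of_lie_mem_swap (hbr₂ _ (hMM c (hZstarM hc) v (hWM hv)) c hc))
      hWZ hWaniso hw
    simpa only [sq, Module.End.mul_apply, ad_apply] using this
  exact lie_lie_mem_of_lie_lie_self_mem hself
    (fun c hc d hd => hbr₁ _ (hMM c (hZstarM hc) d (hZstarM hd)) w (Submodule.mem_sup_right hw))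
    ha hb

theorem lie_mem_H_sup_center_sup_W (htop : H ⊔ M = ⊤) (hHH : ∀ x ∈ H, ∀ y ∈ H, ⁅x, y⁆ ∈ H)
    (hMM : ∀ x ∈ M, ∀ y ∈ M, ⁅x, y⁆ ∈ H) (hHM : ∀ h ∈ H, ∀ m ∈ M, ⁅h, m⁆ ∈ 𝔷 ⊔ W) (x y : L) :
    ⁅x, y⁆ ∈ H ⊔ (𝔷 ⊔ W) :=
  have hL : ∀ x : L, x ∈ H ⊔ M := fun _ => htop ▸ Submodule.mem_top
  lie_mem_of_mem_sup_left (hL x)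
    (fun h hh => lie_mem_of_mem_sup_right (hL y)
      (fun h' hh' => Submodule.mem_sup_left (hHH h hh h' hh'))
      (fun m hm => Submodule.mem_sup_right (hHM h hh m hm)))
    (fun m hm => lie_mem_of_mem_sup_right (hL y)
      (fun h hh => Submodule.mem_sup_right (lie_mem_of_lie_mem_swap (hHM h hh m hm)))
      (fun m' hm' => Submodule.mem_sup_left (hMM m hm m' hm')))

theorem isNilpotent_of_brackets_mem_lieTransporter (htop : H ⊔ M = ⊤)
    (hsum : 𝔷 ⊔ W ⊔ Zstar = M)
    (hHH : ∀ x ∈ H, ∀ y ∈ H, ⁅x, y⁆ ∈ H) (hMM : ∀ x ∈ M, ∀ y ∈ M, ⁅x, y⁆ ∈ H)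
    (hHM : ∀ h ∈ H, ∀ m ∈ M, ⁅h, m⁆ ∈ 𝔷 ⊔ W) (hbr₁ : ∀ h ∈ H, ∀ x ∈ 𝔷 ⊔ W, ⁅h, x⁆ ∈ 𝔷)
    (hWW : ∀ w ∈ W, ∀ w' ∈ W, ⁅w, w'⁆ = 0)
    (hHP : ∀ h ∈ H, ∀ p ∈ H ⊓ lieTransporter M 𝔷, ⁅h, p⁆ = 0)
    (hZstarW : ∀ a ∈ Zstar, ∀ w ∈ W, ⁅a, w⁆ ∈ H ⊓ lieTransporter M 𝔷) :
    LieRing.IsNilpotent L := by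
  set P := H ⊓ lieTransporter M 𝔷
  have hL : ∀ x : L, x ∈ H ⊔ M := fun _ => htop ▸ Submodule.mem_top
  have hP : ∀ x, ∀ y ∈ P, ⁅x, y⁆ ∈ 𝔷 := fun x y hy =>
    lie_mem_of_mem_sup_left (hL x) (fun h hh => hHP h hh y hy ▸ Submodule.zero_mem _)
      (fun m hm => lie_mem_of_lie_mem_swap (hy.2 m hm))
  have hW : ∀ x, ∀ y ∈ W, ⁅x, y⁆ ∈ P ⊔ 𝔷 := fun x y hy =>
    lie_mem_of_mem_sup_left (hL x)
      (fun h hh => Submodule.mem_sup_right (hbr₁ h hh y (Submodule.mem_sup_right hy)))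
      (fun m hm => lie_mem_of_mem_sup_left (hsum ▸ hm)
        (fun _ hx => lie_mem_of_mem_sup_left hx
          (fun _ hz => lie_mem_of_lie_mem_swap (lie_mem_of_mem_center hz y))
          (fun w hw => hWW w hw y hy ▸ Submodule.zero_mem _))
        (fun a ha => Submodule.mem_sup_left (hZstarW a ha y hy)))
  have hH : ∀ x, ∀ y ∈ H, ⁅x, y⁆ ∈ P ⊔ (𝔷 ⊔ W) := fun x y hy =>
    lie_mem_of_mem_sup_left (hL x)
      (fun h hh => Submodule.mem_sup_left
        ⟨hHH h hh y hy, lie_H_H_mem_lieTransporter hHM hbr₁ hh hy⟩)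
      (fun m hm => Submodule.mem_sup_right (lie_mem_of_lie_mem_swap (hHM y hy m hm)))
  have h1 := toSubmodule_lowerCentralSeries_succ_le (k := 0) le_top (T := H ⊔ (𝔷 ⊔ W))
    fun x y _ => lie_mem_H_sup_center_sup_W htop hHH hMM hHM x y
  have h2 := toSubmodule_lowerCentralSeries_succ_le h1 (T := P ⊔ (𝔷 ⊔ W))
    fun x y hy => lie_mem_of_mem_sup_right hy (hH x)
      (fun u hu => lie_mem_of_mem_sup_right hu (fun _ hz => lie_mem_of_mem_center hz x)
        (fun w hw => sup_le_sup_left le_sup_left P (hW x w hw)))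
  have h3 := toSubmodule_lowerCentralSeries_succ_le h2 (T := P ⊔ 𝔷)
    fun x y hy => lie_mem_of_mem_sup_right hy (fun p hp => Submodule.mem_sup_right (hP x p hp))
      (fun u hu => lie_mem_of_mem_sup_right hu (fun _ hz => lie_mem_of_mem_center hz x) (hW x))
  have h4 := toSubmodule_lowerCentralSeries_succ_le h3 (T := 𝔷)
    fun x y hy => lie_mem_of_mem_sup_right hy (hP x) (fun _ hz => lie_mem_of_mem_center hz x)
  have h5 := toSubmodule_lowerCentralSeries_succ_le h4 (T := ⊥)
    fun x _ hz => lie_mem_of_mem_center hz x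
  exact LieModule.IsNilpotent.mk L (k := 5)
    ((LieSubmodule.toSubmodule_eq_bot _).1 (le_bot_iff.1 h5))

theorem isNilpotent_of_lie_Zstar_lie_W_mem_center (hB : B.IsSymm) (hBnd : B.Nondegenerate)
    (hBad : ∀ x y z : L, B ⁅x, y⁆ z = B x ⁅y, z⁆) (htop : H ⊔ M = ⊤)
    (hHspan : H = Submodule.span K {z : L | ∃ x ∈ M, ∃ y ∈ M, ⁅x, y⁆ = z})
    (horth : ∀ h ∈ H, ∀ m ∈ M, B h m = 0) (hHH : ∀ x ∈ H, ∀ y ∈ H, ⁅x, y⁆ ∈ H)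
    (hMM : ∀ x ∈ M, ∀ y ∈ M, ⁅x, y⁆ ∈ H) (hWM : W ≤ M) (hZstarM : Zstar ≤ M)
    (hsum : 𝔷 ⊔ W ⊔ Zstar = M) (hWZ : ∀ w ∈ W, ∀ z ∈ LieAlgebra.center K L, B w z = 0)
    (hpair₁ : ∀ a ∈ LieAlgebra.center K L, (∀ b ∈ Zstar, B a b = 0) → a = 0)
    (hbr₁ : ∀ h ∈ H, ∀ x ∈ 𝔷 ⊔ W, ⁅h, x⁆ ∈ 𝔷) (hbr₂ : ∀ h ∈ H, ∀ x ∈ Zstar, ⁅h, x⁆ ∈ 𝔷 ⊔ W)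
    (hcond : ∀ a ∈ Zstar, ∀ b ∈ Zstar, ∀ w ∈ W, ⁅a, ⁅b, w⁆⁆ ∈ 𝔷) :
    LieRing.IsNilpotent L := by
  have hHM : ∀ h ∈ H, ∀ m ∈ M, ⁅h, m⁆ ∈ 𝔷 ⊔ W := fun _ hh _ hm =>
    lie_mem_center_sup_W hsum hbr₁ hbr₂ hh hm
  have hfaith : ∀ u ∈ H, (∀ m ∈ M, ⁅u, m⁆ = 0) → u = 0 := fun _ hu =>
    eq_zero_of_forall_lie_eq_zero hBnd hBad htop hHspan horth hu
  have hPW : ∀ p ∈ H ⊓ lieTransporter M 𝔷, ∀ w ∈ W, ⁅p, w⁆ = 0 := fun _ hp _ hw =>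
    lie_W_eq_zero_of_lie_Zstar_mem_center hB hBad hWZ hpair₁ hbr₁ hp.1
      (fun a ha => hp.2 a (hZstarM ha)) hw
  have hZstarW : ∀ a ∈ Zstar, ∀ w ∈ W, ⁅a, w⁆ ∈ H ⊓ lieTransporter M 𝔷 := fun a ha w hw =>
    have haw := hMM a (hZstarM ha) w (hWM hw)
    ⟨haw, mem_lieTransporter_of_lie_Zstar_mem_center hB hBad hWZ hpair₁ hbr₁ hsum haw
      fun b hb => lie_mem_of_lie_mem_swap (hcond b hb a ha w hw)⟩
  exact isNilpotent_of_brackets_mem_lieTransporter htop hsum hHH hMM hHM hbr₁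
    (fun _ hw _ hw' => lie_W_W_eq_zero hBnd hBad htop horth hMM hWM hWZ hbr₁ hw hw')
    (fun _ hh p hp => lie_H_eq_zero_of_mem_lieTransporter hfaith hHH hHM hh hp.1 hp.2 (hPW p hp))
    hZstarW

end Adapted

theorem nilpotent_iff_brackets_in_center_general
    (L : Type*) [LieRing L] [LieAlgebra ℝ L]
    (σ : L →ₗ⁅ℝ⁆ L)
    (H M : Submodule ℝ L)
    (hH : ∀ x, x ∈ H ↔ σ x = x)
    (hM : ∀ x, x ∈ M ↔ σ x = -x)
    (hcompl : IsCompl H M)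
    (hHspan : H = Submodule.span ℝ {z : L | ∃ x ∈ M, ∃ y ∈ M, ⁅x, y⁆ = z})
    (B : LinearMap.BilinForm ℝ L)
    (hBnd : B.Nondegenerate)
    (hBsymm : ∀ x y : L, B x y = B y x)
    (hBσ : ∀ x y : L, B (σ x) (σ y) = B x y)
    (hBad : ∀ x y z : L, B ⁅x, y⁆ z = B x ⁅y, z⁆)
    -- adapted decomposition m = z ⊕ W ⊕ z* with maximal center
    (W Zstar : Submodule ℝ L)
    (hWM : W ≤ M) (hZstarM : Zstar ≤ M)
    (hsum : (LieAlgebra.center ℝ L).toSubmodule ⊔ W ⊔ Zstar = M)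
    (hWZ : ∀ w ∈ W, ∀ z ∈ LieAlgebra.center ℝ L, B w z = 0)
    (hWpos : ∀ w ∈ W, w ≠ 0 → 0 < B w w)
    (hpair₁ : ∀ a ∈ LieAlgebra.center ℝ L, (∀ b ∈ Zstar, B a b = 0) → a = 0)
    (hbr₁ : ∀ h ∈ H, ∀ x ∈ (LieAlgebra.center ℝ L).toSubmodule ⊔ W,
      ⁅h, x⁆ ∈ (LieAlgebra.center ℝ L).toSubmodule)
    (hbr₂ : ∀ h ∈ H, ∀ x ∈ Zstar,
      ⁅h, x⁆ ∈ (LieAlgebra.center ℝ L).toSubmodule ⊔ W) :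
    (LieRing.IsNilpotent L ↔
      ∀ a ∈ Zstar, ∀ b ∈ Zstar, ∀ w ∈ W,
        ⁅a, ⁅b, w⁆⁆ ∈ (LieAlgebra.center ℝ L).toSubmodule) ∧
    (W = ⊥ → LieRing.IsNilpotent L) := by
  have hB : B.IsSymm := ⟨hBsymm⟩
  have htop : H ⊔ M = ⊤ := hcompl.sup_eq_top
  have hHH : ∀ x ∈ H, ∀ y ∈ H, ⁅x, y⁆ ∈ H := fun _ hx _ hy => lie_mem_of_mem_fixed hH hx hy
  have hMM : ∀ x ∈ M, ∀ y ∈ M, ⁅x, y⁆ ∈ H := fun _ hx _ hy =>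
    lie_mem_of_mem_antifixed hH hM hx hy
  have horth : ∀ h ∈ H, ∀ m ∈ M, B h m = 0 := fun h hh m hm =>
    apply_eq_zero_of_isOrthogonal hBσ ((hH h).1 hh) ((hM m).1 hm)
  have hWaniso : ∀ w ∈ W, B w w = 0 → w = 0 := fun w hw h0 =>
    not_not.1 fun hne => (hWpos w hw hne).ne' h0
  have main : LieRing.IsNilpotent L ↔
      ∀ a ∈ Zstar, ∀ b ∈ Zstar, ∀ w ∈ W, ⁅a, ⁅b, w⁆⁆ ∈ (LieAlgebra.center ℝ L).toSubmodule :=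
    ⟨fun _ _ ha _ hb _ hw => lie_Zstar_lie_W_mem_center_of_isNilpotent hB hBad hMM hWM hZstarM
      hWZ hWaniso hbr₁ hbr₂ ha hb hw,
    isNilpotent_of_lie_Zstar_lie_W_mem_center hB hBnd hBad htop hHspan horth hHH hMM hWM hZstarM
      hsum hWZ hpair₁ hbr₁ hbr₂⟩
  refine ⟨main, fun hW => main.2 fun _ _ _ _ w hw => ?_⟩
  rw [hW, Submodule.mem_bot] at hw
  rw [hw, lie_zero, lie_zero]
  exact Submodule.zero_mem _

/-- An indecomposable solvable symmetric triple with adapted decomposition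
`m = z ⊕ W ⊕ z*` with maximal center is nilpotent iff `⁅z*, ⁅z*, W⁆⁆ ⊆ z`.  In particular,
if `W = 0` then `g` is nilpotent. -/
theorem nilpotent_iff_brackets_in_center
    (L : Type*) [LieRing L] [LieAlgebra ℝ L] [FiniteDimensional ℝ L]
    [LieAlgebra.IsSolvable L]
    (σ : L →ₗ⁅ℝ⁆ L) (hσ : ∀ x, σ (σ x) = x)
    (H M : Submodule ℝ L)
    (hH : ∀ x, x ∈ H ↔ σ x = x)
    (hM : ∀ x, x ∈ M ↔ σ x = -x)
    (hcompl : IsCompl H M)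
    (hHspan : H = Submodule.span ℝ {z : L | ∃ x ∈ M, ∃ y ∈ M, ⁅x, y⁆ = z})
    (B : LinearMap.BilinForm ℝ L)
    (hBnd : B.Nondegenerate)
    (hBsymm : ∀ x y : L, B x y = B y x)
    (hBσ : ∀ x y : L, B (σ x) (σ y) = B x y)
    (hBad : ∀ x y z : L, B ⁅x, y⁆ z = B x ⁅y, z⁆)
    (hindec : ∀ m' : Submodule ℝ L, m' ≤ M →
      (∀ h ∈ H, ∀ x ∈ m', ⁅h, x⁆ ∈ m') →
      (∀ x ∈ m', (∀ y ∈ m', B x y = 0) → x = 0) →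
      m' = ⊥ ∨ m' = M)
    -- adapted decomposition m = z ⊕ W ⊕ z* with maximal center
    (W Zstar : Submodule ℝ L)
    (hWM : W ≤ M) (hZstarM : Zstar ≤ M)
    (hdisj₁ : Disjoint (LieAlgebra.center ℝ L).toSubmodule W)
    (hdisj₂ : Disjoint ((LieAlgebra.center ℝ L).toSubmodule ⊔ W) Zstar)
    (hsum : (LieAlgebra.center ℝ L).toSubmodule ⊔ W ⊔ Zstar = M)
    (hZiso : ∀ x ∈ LieAlgebra.center ℝ L, ∀ y ∈ LieAlgebra.center ℝ L, B x y = 0)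
    (hZstariso : ∀ x ∈ Zstar, ∀ y ∈ Zstar, B x y = 0)
    (hWZ : ∀ w ∈ W, ∀ z ∈ LieAlgebra.center ℝ L, B w z = 0)
    (hWZstar : ∀ w ∈ W, ∀ a ∈ Zstar, B w a = 0)
    (hWpos : ∀ w ∈ W, w ≠ 0 → 0 < B w w)
    (hpair₁ : ∀ a ∈ LieAlgebra.center ℝ L, (∀ b ∈ Zstar, B a b = 0) → a = 0)
    (hpair₂ : ∀ b ∈ Zstar, (∀ a ∈ LieAlgebra.center ℝ L, B a b = 0) → b = 0)
    (hbr₁ : ∀ h ∈ H, ∀ x ∈ (LieAlgebra.center ℝ L).toSubmodule ⊔ W,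
      ⁅h, x⁆ ∈ (LieAlgebra.center ℝ L).toSubmodule)
    (hbr₂ : ∀ h ∈ H, ∀ x ∈ Zstar,
      ⁅h, x⁆ ∈ (LieAlgebra.center ℝ L).toSubmodule ⊔ W) :
    (LieRing.IsNilpotent L ↔
      ∀ a ∈ Zstar, ∀ b ∈ Zstar, ∀ w ∈ W,
        ⁅a, ⁅b, w⁆⁆ ∈ (LieAlgebra.center ℝ L).toSubmodule) ∧
    (W = ⊥ → LieRing.IsNilpotent L) :=
  nilpotent_iff_brackets_in_center_general L σ H M hH hM hcompl hHspan B hBnd hBsymm hBσ hBad W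
    Zstar hWM hZstarM hsum hWZ hWpos hpair₁ hbr₁ hbr₂
end

section
/- Let (g,σ,B) be an indecomposable solvable symmetric triple with g = h ⊕ m and an adapted decomposition m = z ⊕ W ⊕ z* with maximal center (z = z(g)), and let pr_W denote the projection of m onto W along z ⊕ z*. Suppose the triple is least nilpotent, i.e. the only vector w ∈ W with pr_W(⁅a, ⁅b, w⁆⁆) = 0 for all a,b ∈ z* is w = 0. Then the holonomy algebra h is abelian: ⁅h,h⁆ = 0. -/
/-!
Put `c = ⁅h₁, h₂⁆`. The bracket relations of the adapted decomposition force `c` to kill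
`𝔷 ⊕ W` and to map `𝔷*` into `𝔷`. Since `𝔥 = ⁅𝔪, 𝔪⁆` acts faithfully on `𝔪` and `𝔷` is
paired nondegenerately with `𝔷*`, it suffices to show `B ⁅a, b⁆ c = 0` for `a, b ∈ 𝔷*`.

The operators `P a b = pr_W ∘ ad a ∘ ad b` on `W` (`a, b ∈ 𝔷*`) are `B`-self-adjoint and commute
pairwise, and least nilpotency says that they have no common kernel. Hence `A = ∑ P²`, taken over
a finite spanning family, is positive definite and so invertible. As `⁅W, W⁆ = 0`, `c` is a sum
`∑ ⁅pᵢ, vᵢ⁆` with `pᵢ ∈ 𝔷*`, `vᵢ ∈ W`, and the functional `φ T = ∑ B vᵢ (T (pr_W ⁅⁅a, b⁆, pᵢ⁆))`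
vanishes on `T * P x y` for every `T` commuting with all `P` (by an exchange identity for the `P`
and `⁅c, 𝔷*⁆ ⊆ 𝔷`). So it vanishes on `1 = ∑ (A⁻¹ * P) * P`, and `φ 1 = B ⁅a, b⁆ c`.
-/

open Finset in
theorem map_one_eq_zero_of_isUnit_sum_mul_self {R G : Type*} [Semiring R] [AddCommMonoid G]
    {S : Set R} (hS : S ⊆ Subsemiring.centralizer S) {s : Finset R} (hs : ↑s ⊆ S)
    (hunit : IsUnit (∑ n ∈ s, n * n)) (φ : R →+ G)
    (hφ : ∀ T ∈ Subsemiring.centralizer S, ∀ n ∈ S, φ (T * n) = 0) : φ 1 = 0 := by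
  obtain ⟨u, hu⟩ := hunit
  have hA : ↑u ∈ Subsemiring.centralizer S :=
    hu ▸ sum_mem fun n hn => mul_mem (hS (hs hn)) (hS (hs hn))
  have hinv : ↑u⁻¹ ∈ Subsemiring.centralizer S := fun m hm =>
    (Commute.units_inv_left (hA m hm).symm).symm.eq
  have hone : (1 : R) = ∑ n ∈ s, (↑u⁻¹ * n) * n := by
    simp only [mul_assoc, ← mul_sum, hu ▸ u.inv_mul]
  rw [hone, map_sum]
  exact sum_eq_zero fun n hn => hφ _ (mul_mem hinv (hS (hs hn))) n (hs hn)

theorem exists_finset_isUnit_sum_mul_self {𝕜 V : Type*} [Field 𝕜] [LinearOrder 𝕜]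
    [IsStrictOrderedRing 𝕜] [AddCommGroup V] [Module 𝕜 V] [FiniteDimensional 𝕜 V]
    {β : LinearMap.BilinForm 𝕜 V} (hβ : ∀ v, v ≠ 0 → 0 < β v v) {S : Set (Module.End 𝕜 V)}
    (hadj : ∀ n ∈ S, ∀ x y, β (n x) y = β x (n y)) (hker : ∀ v, (∀ n ∈ S, n v = 0) → v = 0) :
    ∃ s : Finset (Module.End 𝕜 V), ↑s ⊆ S ∧ IsUnit (∑ n ∈ s, n * n) := by
  obtain ⟨s, hsS, hspan⟩ :=
    (Submodule.fg_span_iff_fg_span_finset_subset S).1 (IsNoetherian.noetherian (R := 𝕜) _)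
  refine ⟨s, hsS, (LinearMap.isUnit_iff_ker_eq_bot _).2 (LinearMap.ker_eq_bot'.2 fun v hv => ?_)⟩
  have hnonneg : ∀ x, 0 ≤ β x x := fun x => by
    rcases eq_or_ne x 0 with rfl | hx
    · simp
    · exact (hβ x hx).le
  have hsum : ∑ n ∈ s, β (n v) (n v) = 0 := calc
    _ = β ((∑ n ∈ s, n * n) v) v := by
      simp only [LinearMap.sum_apply, map_sum, Module.End.mul_apply]
      exact Finset.sum_congr rfl fun n hn => (hadj n (hsS hn) (n v) v).symm
    _ = 0 := by rw [hv, map_zero, LinearMap.zero_apply]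
  have hs : ∀ n ∈ s, n v = 0 := fun n hn => by
    by_contra h
    exact (hβ _ h).ne' ((Finset.sum_eq_zero_iff_of_nonneg fun n _ => hnonneg (n v)).1 hsum n hn)
  refine hker v fun n hn => ?_
  have : n ∈ Submodule.span 𝕜 (s : Set (Module.End 𝕜 V)) := hspan ▸ Submodule.subset_span hn
  exact (Submodule.span_le (p := LinearMap.ker (LinearMap.applyₗ v))).2 hs this

section Bracket

variable {R L : Type*} [CommRing R] [LieRing L] [LieAlgebra R L]

theorem LinearMap.BilinForm.eq_zero_of_sup_eq_top {B : LinearMap.BilinForm R L}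
    (hB : B.SeparatingLeft) {H M : Submodule R L} (hHM : H ⊔ M = ⊤) {x : L}
    (hxH : ∀ h ∈ H, B x h = 0) (hxM : ∀ m ∈ M, B x m = 0) : x = 0 := by
  refine hB x fun y => ?_
  obtain ⟨h, hh, m, hm, rfl⟩ := Submodule.mem_sup.1 (hHM ▸ Submodule.mem_top : y ∈ H ⊔ M)
  rw [map_add, hxH h hh, hxM m hm, add_zero]

theorem LinearMap.BilinForm.apply_eq_zero_of_map_eq_self_of_map_eq_neg [IsAddTorsionFree R]
    {V : Type*} [AddCommGroup V] [Module R V] {B : LinearMap.BilinForm R V} {σ : V → V}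
    (hB : ∀ x y, B (σ x) (σ y) = B x y) {x y : V} (hx : σ x = x) (hy : σ y = -y) :
    B x y = 0 := by
  have h := hB x y
  rwa [hx, hy, map_neg, eq_comm, self_eq_neg] at h

theorem LinearMap.IsProj.sub_mem_of_mem_sup {V : Type*} [AddCommGroup V] [Module R V]
    {Z W : Submodule R V} {f : V →ₗ[R] V} (hf : IsProj W f) (hZ : Z ≤ ker f) {u : V}
    (hu : u ∈ Z ⊔ W) : u - f u ∈ Z := by
  obtain ⟨z, hz, w, hw, rfl⟩ := Submodule.mem_sup.1 hu
  rwa [map_add, mem_ker.1 (hZ hz), hf.map_id w hw, zero_add, add_sub_cancel_right]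

theorem LinearMap.IsProj.bilin_apply_map_eq {V : Type*} [AddCommGroup V] [Module R V]
    {Z W : Submodule R V} {f : V →ₗ[R] V} (hf : IsProj W f) (hZ : Z ≤ ker f)
    {B : LinearMap.BilinForm R V} (hBW : ∀ w ∈ W, ∀ z ∈ Z, B w z = 0) {x w : V}
    (hx : x ∈ Z ⊔ W) (hw : w ∈ W) : B w (f x) = B w x := by
  rw [← sub_eq_zero, ← map_sub, ← neg_sub, map_neg, hBW w hw _ (hf.sub_mem_of_mem_sup hZ hx),
    neg_zero]

theorem LieHom.map_lie_eq_self_of_map_eq_neg (σ : L →ₗ⁅R⁆ L) {x y : L} (hx : σ x = -x)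
    (hy : σ y = -y) : σ ⁅x, y⁆ = ⁅x, y⁆ := by
  rw [LieHom.map_lie, hx, hy, neg_lie, lie_neg, neg_neg]

theorem eq_zero_of_mem_of_forall_lie_eq_zero {B : LinearMap.BilinForm R L}
    (hB : B.SeparatingLeft) {H M : Submodule R L} (hHM : H ⊔ M = ⊤)
    (hH : H ≤ Submodule.span R (Set.image2 (⁅·, ·⁆) (M : Set L) M))
    (hBHM : ∀ h ∈ H, ∀ m ∈ M, B h m = 0) (hBad : ∀ x y z : L, B ⁅x, y⁆ z = B x ⁅y, z⁆) {c : L}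
    (hc : c ∈ H) (hcM : ∀ x ∈ M, ⁅c, x⁆ = 0) : c = 0 := by
  refine LinearMap.BilinForm.eq_zero_of_sup_eq_top hB hHM (fun h hh => ?_)
    (hBHM c hc)
  have hspan := hH hh
  clear hh
  induction hspan using Submodule.span_induction with
  | mem _ hxy =>
    obtain ⟨x, hx, y, hy, rfl⟩ := hxy
    rw [← hBad, hcM x hx, map_zero, LinearMap.zero_apply]
  | zero => exact map_zero _
  | add _ _ _ _ hx hy => rw [map_add, hx, hy, add_zero]
  | smul r _ _ hx => rw [map_smul, hx, smul_zero]

theorem exists_sum_lie_eq_of_mem_span {P : Set L} {W : Submodule R L} {c : L}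
    (hc : c ∈ Submodule.span R (Set.image2 (⁅·, ·⁆) P W)) :
    ∃ (n : ℕ) (p : Fin n → L) (v : Fin n → W), (∀ i, p i ∈ P) ∧ ∑ i, ⁅p i, (v i : L)⁆ = c := by
  obtain ⟨n, f, g, rfl⟩ := Submodule.mem_span_set'.1 hc
  choose p hp v hv hpv using fun i => (g i).2
  exact ⟨n, p, fun i => f i • ⟨v i, hv i⟩, hp, by simp [lie_smul, hpv]⟩

/-- The bracket relations of `𝔥 ⊕ 𝔪` with `𝔪 = 𝔷 ⊕ W ⊕ 𝔷*` and `𝔷` central. -/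
structure IsAdaptedDecomposition (H M Z W Zstar : Submodule R L) : Prop where
  lie_eq_zero_of_mem_Z : ∀ z ∈ Z, ∀ x : L, ⁅x, z⁆ = 0
  lie_mem_H : ∀ x ∈ M, ∀ y ∈ M, ⁅x, y⁆ ∈ H
  sup_eq : Z ⊔ W ⊔ Zstar = M
  lie_H_ZW : ∀ h ∈ H, ∀ x ∈ Z ⊔ W, ⁅h, x⁆ ∈ Z
  lie_H_Zstar : ∀ h ∈ H, ∀ x ∈ Zstar, ⁅h, x⁆ ∈ Z ⊔ W

namespace IsAdaptedDecomposition

variable {H M Z W Zstar : Submodule R L}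

theorem W_le (hD : IsAdaptedDecomposition H M Z W Zstar) : W ≤ M :=
  le_sup_right.trans (hD.sup_eq ▸ le_sup_left)

theorem Zstar_le (hD : IsAdaptedDecomposition H M Z W Zstar) : Zstar ≤ M :=
  hD.sup_eq ▸ le_sup_right

theorem lie_eq_lie_of_sub_mem (hD : IsAdaptedDecomposition H M Z W Zstar) {u u' : L}
    (h : u - u' ∈ Z) (x : L) : ⁅x, u⁆ = ⁅x, u'⁆ := by
  rw [← sub_eq_zero, ← lie_sub, hD.lie_eq_zero_of_mem_Z _ h]

theorem lie_lie_sub_lie_lie_mem (hD : IsAdaptedDecomposition H M Z W Zstar) {x y u : L}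
    (hx : x ∈ M) (hy : y ∈ M) (hu : u ∈ Z ⊔ W) : ⁅x, ⁅y, u⁆⁆ - ⁅y, ⁅x, u⁆⁆ ∈ Z := by
  rw [← lie_lie]
  exact hD.lie_H_ZW _ (hD.lie_mem_H x hx y hy) u hu

theorem lie_lie_lie_mem (hD : IsAdaptedDecomposition H M Z W Zstar) {h₁ h₂ x : L}
    (h₁H : h₁ ∈ H) (h₂H : h₂ ∈ H) (hx : x ∈ Zstar) : ⁅⁅h₁, h₂⁆, x⁆ ∈ Z := by
  rw [lie_lie]
  exact sub_mem (hD.lie_H_ZW _ h₁H _ (hD.lie_H_Zstar _ h₂H x hx))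
    (hD.lie_H_ZW _ h₂H _ (hD.lie_H_Zstar _ h₁H x hx))

theorem lie_lie_lie_sub_mem (hD : IsAdaptedDecomposition H M Z W Zstar) {a y z v : L}
    (ha : a ∈ Zstar) (hy : y ∈ M) (hz : z ∈ M) (hv : v ∈ H) :
    ⁅a, ⁅y, ⁅z, v⁆⁆⁆ - ⁅a, ⁅z, ⁅y, v⁆⁆⁆ ∈ Z := by
  rw [← lie_sub, ← lie_lie, ← lie_skew]
  exact neg_mem (hD.lie_lie_lie_mem (hD.lie_mem_H y hy z hz) hv ha)

theorem lie_lie_lie_eq_zero (hD : IsAdaptedDecomposition H M Z W Zstar) {h₁ h₂ u : L}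
    (h₁H : h₁ ∈ H) (h₂H : h₂ ∈ H) (hu : u ∈ Z ⊔ W) : ⁅⁅h₁, h₂⁆, u⁆ = 0 := by
  rw [lie_lie, hD.lie_eq_zero_of_mem_Z _ (hD.lie_H_ZW _ h₂H u hu),
    hD.lie_eq_zero_of_mem_Z _ (hD.lie_H_ZW _ h₁H u hu), sub_zero]

theorem lie_mem_sup_of_mem_M (hD : IsAdaptedDecomposition H M Z W Zstar) {h x : L}
    (hh : h ∈ H) (hx : x ∈ M) : ⁅h, x⁆ ∈ Z ⊔ W := by
  rw [← hD.sup_eq] at hx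
  obtain ⟨u, hu, a, ha, rfl⟩ := Submodule.mem_sup.1 hx
  rw [lie_add]
  exact add_mem (Submodule.mem_sup_left (hD.lie_H_ZW h hh u hu)) (hD.lie_H_Zstar h hh a ha)

theorem lie_lie_mem_sup (hD : IsAdaptedDecomposition H M Z W Zstar) {a x y : L}
    (ha : a ∈ Zstar) (hx : x ∈ M) (hy : y ∈ M) : ⁅a, ⁅x, y⁆⁆ ∈ Z ⊔ W := by
  rw [← lie_skew]
  exact neg_mem (hD.lie_H_Zstar _ (hD.lie_mem_H x hx y hy) a ha)

theorem lie_eq_zero_of_mem_W (hD : IsAdaptedDecomposition H M Z W Zstar)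
    {B : LinearMap.BilinForm R L} (hB : B.SeparatingLeft) (hHM : H ⊔ M = ⊤)
    (hBHM : ∀ h ∈ H, ∀ m ∈ M, B h m = 0) (hBad : ∀ x y z : L, B ⁅x, y⁆ z = B x ⁅y, z⁆)
    (hBW : ∀ w ∈ W, ∀ z ∈ Z, B w z = 0) {w w' : L} (hw : w ∈ W) (hw' : w' ∈ W) :
    ⁅w, w'⁆ = 0 := by
  refine LinearMap.BilinForm.eq_zero_of_sup_eq_top hB hHM (fun h hh => ?_)
    (hBHM _ (hD.lie_mem_H w (hD.W_le hw) w' (hD.W_le hw')))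
  rw [hBad, ← lie_skew, map_neg, hBW w hw _ (hD.lie_H_ZW h hh w' (Submodule.mem_sup_right hw')),
    neg_zero]

theorem lie_mem_span_of_mem_sup (hD : IsAdaptedDecomposition H M Z W Zstar)
    (hWW : ∀ w ∈ W, ∀ w' ∈ W, ⁅w, w'⁆ = 0) {u y : L} (hu : u ∈ Z ⊔ W) (hy : y ∈ M) :
    ⁅u, y⁆ ∈ Submodule.span R (Set.image2 (⁅·, ·⁆) (Zstar : Set L) W) := by
  obtain ⟨z, hz, w, hw, rfl⟩ := Submodule.mem_sup.1 hu
  rw [← hD.sup_eq] at hy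
  obtain ⟨u', hu', a, ha, rfl⟩ := Submodule.mem_sup.1 hy
  obtain ⟨z', hz', w', hw', rfl⟩ := Submodule.mem_sup.1 hu'
  rw [add_lie, ← lie_skew, hD.lie_eq_zero_of_mem_Z z hz, neg_zero, zero_add, lie_add, lie_add,
    hD.lie_eq_zero_of_mem_Z z' hz', hWW w hw w' hw', zero_add, zero_add, ← lie_skew]
  exact neg_mem (Submodule.subset_span ⟨a, ha, w, hw, rfl⟩)

theorem lie_mem_span_of_mem_H (hD : IsAdaptedDecomposition H M Z W Zstar)
    (hWW : ∀ w ∈ W, ∀ w' ∈ W, ⁅w, w'⁆ = 0)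
    (hH : H ≤ Submodule.span R (Set.image2 (⁅·, ·⁆) (M : Set L) M)) {h₁ h₂ : L} (h₁H : h₁ ∈ H)
    (h₂H : h₂ ∈ H) : ⁅h₁, h₂⁆ ∈ Submodule.span R (Set.image2 (⁅·, ·⁆) (Zstar : Set L) W) := by
  have hspan := hH h₂H
  clear h₂H
  induction hspan using Submodule.span_induction with
  | mem _ hxy =>
    obtain ⟨x, hx, y, hy, rfl⟩ := hxy
    rw [leibniz_lie, ← lie_skew x]
    exact add_mem (hD.lie_mem_span_of_mem_sup hWW (hD.lie_mem_sup_of_mem_M h₁H hx) hy)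
      (neg_mem (hD.lie_mem_span_of_mem_sup hWW (hD.lie_mem_sup_of_mem_M h₁H hy) hx))
  | zero => simp
  | add _ _ _ _ hx hy => rw [lie_add]; exact add_mem hx hy
  | smul r _ _ hx => rw [lie_smul]; exact Submodule.smul_mem _ r hx

end IsAdaptedDecomposition

variable {W : Submodule R L} {prW : L →ₗ[R] L}

def projLieLie (hproj : LinearMap.IsProj W prW) (a b : L) : Module.End R W :=
  hproj.codRestrict ∘ₗ LieAlgebra.ad R L a ∘ₗ LieAlgebra.ad R L b ∘ₗ W.subtype

@[simp]
theorem coe_projLieLie_apply (hproj : LinearMap.IsProj W prW) (a b : L) (w : W) :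
    (projLieLie hproj a b w : L) = prW ⁅a, ⁅b, (w : L)⁆⁆ :=
  rfl

namespace IsAdaptedDecomposition

variable {H M Z Zstar : Submodule R L}

theorem lie_proj_eq (hD : IsAdaptedDecomposition H M Z W Zstar)
    (hproj : LinearMap.IsProj W prW) (hker : Z ≤ LinearMap.ker prW) {u : L} (hu : u ∈ Z ⊔ W)
    (x : L) : ⁅x, prW u⁆ = ⁅x, u⁆ :=
  (hD.lie_eq_lie_of_sub_mem (hproj.sub_mem_of_mem_sup hker hu) x).symm

theorem projLieLie_comm (hD : IsAdaptedDecomposition H M Z W Zstar)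
    (hproj : LinearMap.IsProj W prW) (hker : Z ≤ LinearMap.ker prW) {a b : L}
    (ha : a ∈ Zstar) (hb : b ∈ Zstar) : projLieLie hproj a b = projLieLie hproj b a := by
  ext w
  exact LinearMap.sub_mem_ker_iff.1 (hker (hD.lie_lie_sub_lie_lie_mem (hD.Zstar_le ha)
    (hD.Zstar_le hb) (Submodule.mem_sup_right w.2)))

theorem coe_projLieLie_projLieLie_apply (hD : IsAdaptedDecomposition H M Z W Zstar)
    (hproj : LinearMap.IsProj W prW) (hker : Z ≤ LinearMap.ker prW) (a b : L) {d e : L}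
    (hd : d ∈ Zstar) (he : e ∈ Zstar) (w : W) :
    (projLieLie hproj a b (projLieLie hproj d e w) : L) = prW ⁅a, ⁅b, ⁅d, ⁅e, (w : L)⁆⁆⁆⁆ := by
  rw [coe_projLieLie_apply, coe_projLieLie_apply,
    hD.lie_proj_eq hproj hker (hD.lie_lie_mem_sup hd (hD.Zstar_le he) (hD.W_le w.2))]

theorem commute_projLieLie (hD : IsAdaptedDecomposition H M Z W Zstar)
    (hproj : LinearMap.IsProj W prW) (hker : Z ≤ LinearMap.ker prW) {a b d e : L}
    (ha : a ∈ Zstar) (hb : b ∈ Zstar) (hd : d ∈ Zstar) (he : e ∈ Zstar) :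
    Commute (projLieLie hproj a b) (projLieLie hproj d e) := by
  have hM {x} (hx : x ∈ Zstar) : x ∈ M := hD.Zstar_le hx
  ext w
  have hw : (w : L) ∈ M := hD.W_le w.2
  rw [Module.End.mul_apply, Module.End.mul_apply,
    hD.coe_projLieLie_projLieLie_apply hproj hker _ _ hd he,
    hD.coe_projLieLie_projLieLie_apply hproj hker _ _ ha hb]
  calc prW ⁅a, ⁅b, ⁅d, ⁅e, (w : L)⁆⁆⁆⁆
      = prW ⁅a, ⁅d, ⁅b, ⁅e, (w : L)⁆⁆⁆⁆ := LinearMap.sub_mem_ker_iff.1 <| hker <|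
        hD.lie_lie_lie_sub_mem ha (hM hb) (hM hd) (hD.lie_mem_H _ (hM he) _ hw)
    _ = prW ⁅a, ⁅d, ⁅e, ⁅b, (w : L)⁆⁆⁆⁆ := by
        rw [hD.lie_eq_lie_of_sub_mem
          (hD.lie_lie_sub_lie_lie_mem (hM hb) (hM he) (Submodule.mem_sup_right w.2)) d]
    _ = prW ⁅d, ⁅a, ⁅e, ⁅b, (w : L)⁆⁆⁆⁆ := LinearMap.sub_mem_ker_iff.1 <| hker <|
        hD.lie_lie_sub_lie_lie_mem (hM ha) (hM hd) (hD.lie_lie_mem_sup he (hM hb) hw)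
    _ = prW ⁅d, ⁅e, ⁅a, ⁅b, (w : L)⁆⁆⁆⁆ := LinearMap.sub_mem_ker_iff.1 <| hker <|
        hD.lie_lie_lie_sub_mem hd (hM ha) (hM he) (hD.lie_mem_H _ (hM hb) _ hw)

theorem projLieLie_codRestrict_lie (hD : IsAdaptedDecomposition H M Z W Zstar)
    (hproj : LinearMap.IsProj W prW) (hker : Z ≤ LinearMap.ker prW) {h a d e : L} (hh : h ∈ H)
    (ha : a ∈ Zstar) (hd : d ∈ Zstar) (he : e ∈ Zstar) :
    projLieLie hproj d e (hproj.codRestrict ⁅h, a⁆) =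
      projLieLie hproj d a (hproj.codRestrict ⁅h, e⁆) := by
  apply Subtype.ext
  rw [coe_projLieLie_apply, coe_projLieLie_apply, LinearMap.IsProj.codRestrict_apply,
    LinearMap.IsProj.codRestrict_apply, hD.lie_proj_eq hproj hker (hD.lie_H_Zstar h hh a ha),
    hD.lie_proj_eq hproj hker (hD.lie_H_Zstar h hh e he)]
  refine LinearMap.sub_mem_ker_iff.1 (hker ?_)
  have hJacobi : ⁅e, ⁅h, a⁆⁆ - ⁅a, ⁅h, e⁆⁆ = ⁅h, ⁅e, a⁆⁆ := by
    rw [leibniz_lie, ← lie_skew e h, neg_lie, lie_skew, add_sub_cancel_left]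
  rw [← lie_sub, hJacobi, ← lie_skew]
  exact neg_mem (hD.lie_lie_lie_mem hh (hD.lie_mem_H _ (hD.Zstar_le he) _ (hD.Zstar_le ha)) hd)

theorem projLieLie_adjoint (hD : IsAdaptedDecomposition H M Z W Zstar)
    (hproj : LinearMap.IsProj W prW) (hker : Z ≤ LinearMap.ker prW)
    {B : LinearMap.BilinForm R L} (hBad : ∀ x y z : L, B ⁅x, y⁆ z = B x ⁅y, z⁆)
    (hBsymm : ∀ x y : L, B x y = B y x) (hBW : ∀ w ∈ W, ∀ z ∈ Z, B w z = 0) {a b : L}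
    (ha : a ∈ Zstar) (hb : b ∈ Zstar) (w w' : W) :
    B (projLieLie hproj a b w) w' = B w (projLieLie hproj a b w') := by
  have hmem {x y : L} (hx : x ∈ Zstar) (hy : y ∈ Zstar) (w : W) : ⁅x, ⁅y, (w : L)⁆⁆ ∈ Z ⊔ W :=
    hD.lie_lie_mem_sup hx (hD.Zstar_le hy) (hD.W_le w.2)
  calc B (projLieLie hproj a b w) w' = B w' (projLieLie hproj b a w) := by
        rw [hBsymm, hD.projLieLie_comm hproj hker ha hb]
    _ = B w' ⁅b, ⁅a, (w : L)⁆⁆ := hproj.bilin_apply_map_eq hker hBW (hmem hb ha w) w'.2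
    _ = B w ⁅a, ⁅b, (w' : L)⁆⁆ := by
        rw [hBsymm, ← hBad, ← hBad, ← lie_skew (w : L) a, neg_lie, lie_skew]
    _ = B w (projLieLie hproj a b w') :=
        (hproj.bilin_apply_map_eq hker hBW (hmem ha hb w') w.2).symm

theorem sum_bilin_projLieLie_eq_zero (hD : IsAdaptedDecomposition H M Z W Zstar)
    (hproj : LinearMap.IsProj W prW) (hker : Z ≤ LinearMap.ker prW)
    {B : LinearMap.BilinForm R L} (hBad : ∀ x y z : L, B ⁅x, y⁆ z = B x ⁅y, z⁆)
    (hBsymm : ∀ x y : L, B x y = B y x) (hBW : ∀ w ∈ W, ∀ z ∈ Z, B w z = 0) {ι : Type*}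
    [Fintype ι] {p : ι → L} (hp : ∀ i, p i ∈ Zstar) (v : ι → W)
    (hc : ∀ x ∈ Zstar, ⁅∑ i, ⁅p i, (v i : L)⁆, x⁆ ∈ Z) {h : L} (hh : h ∈ H)
    (T : Module.End R W) (hT : ∀ a ∈ Zstar, ∀ b ∈ Zstar, Commute T (projLieLie hproj a b))
    {x y : L} (hx : x ∈ Zstar) (hy : y ∈ Zstar) :
    ∑ i, B (v i) (T (projLieLie hproj x y (hproj.codRestrict ⁅h, p i⁆))) = 0 := by
  have hsum : ∑ i, (projLieLie hproj x (p i) (v i) : L) = 0 := by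
    simp only [coe_projLieLie_apply, ← map_sum, ← lie_sum]
    rw [← lie_skew, map_neg, LinearMap.mem_ker.1 (hker (hc x hx)), neg_zero]
  calc ∑ i, B (v i) (T (projLieLie hproj x y (hproj.codRestrict ⁅h, p i⁆)))
      = ∑ i, B (projLieLie hproj x (p i) (v i)) (T (hproj.codRestrict ⁅h, y⁆)) := by
        refine Finset.sum_congr rfl fun i _ => ?_
        rw [hD.projLieLie_codRestrict_lie hproj hker hh (hp i) hx hy, ← Module.End.mul_apply,
          (hT x hx (p i) (hp i)).eq, Module.End.mul_apply,
          ← hD.projLieLie_adjoint hproj hker hBad hBsymm hBW hx (hp i)]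
    _ = 0 := by rw [← LinearMap.sum_apply, ← map_sum, hsum, map_zero, LinearMap.zero_apply]

end IsAdaptedDecomposition

end Bracket

namespace IsAdaptedDecomposition

variable {𝕜 L : Type*} [Field 𝕜] [LinearOrder 𝕜] [IsStrictOrderedRing 𝕜] [LieRing L]
  [LieAlgebra 𝕜 L] [FiniteDimensional 𝕜 L] {H M Z W Zstar : Submodule 𝕜 L} {prW : L →ₗ[𝕜] L}
  {B : LinearMap.BilinForm 𝕜 L}

theorem exists_finset_isUnit_sum_projLieLie_sq (hD : IsAdaptedDecomposition H M Z W Zstar)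
    (hproj : LinearMap.IsProj W prW) (hker : Z ≤ LinearMap.ker prW)
    (hBad : ∀ x y z : L, B ⁅x, y⁆ z = B x ⁅y, z⁆) (hBsymm : ∀ x y : L, B x y = B y x)
    (hBW : ∀ w ∈ W, ∀ z ∈ Z, B w z = 0) (hWpos : ∀ w ∈ W, w ≠ 0 → 0 < B w w)
    (hleast : ∀ w ∈ W, (∀ a ∈ Zstar, ∀ b ∈ Zstar, prW ⁅a, ⁅b, w⁆⁆ = 0) → w = 0) :
    ∃ s : Finset (Module.End 𝕜 W), ↑s ⊆ Set.image2 (projLieLie hproj) Zstar Zstar ∧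
      IsUnit (∑ n ∈ s, n * n) := by
  refine exists_finset_isUnit_sum_mul_self (β := B.restrict W)
    (fun w hw => hWpos w w.2 (by simpa using hw)) ?_ fun w hw => ?_
  · rintro _ ⟨a, ha, b, hb, rfl⟩ x y
    exact hD.projLieLie_adjoint hproj hker hBad hBsymm hBW ha hb x y
  · exact Subtype.ext <| hleast w w.2 fun a ha b hb =>
      congrArg Subtype.val (hw _ ⟨a, ha, b, hb, rfl⟩)

theorem bilin_lie_eq_zero_of_mem_span (hD : IsAdaptedDecomposition H M Z W Zstar)
    (hproj : LinearMap.IsProj W prW) (hker : Z ≤ LinearMap.ker prW)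
    (hBad : ∀ x y z : L, B ⁅x, y⁆ z = B x ⁅y, z⁆) (hBsymm : ∀ x y : L, B x y = B y x)
    (hBW : ∀ w ∈ W, ∀ z ∈ Z, B w z = 0) (hWpos : ∀ w ∈ W, w ≠ 0 → 0 < B w w)
    (hleast : ∀ w ∈ W, (∀ a ∈ Zstar, ∀ b ∈ Zstar, prW ⁅a, ⁅b, w⁆⁆ = 0) → w = 0) {c : L}
    (hc : c ∈ Submodule.span 𝕜 (Set.image2 (⁅·, ·⁆) (Zstar : Set L) W))
    (hcZ : ∀ x ∈ Zstar, ⁅c, x⁆ ∈ Z) {a b : L} (ha : a ∈ Zstar) (hb : b ∈ Zstar) :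
    B ⁅a, b⁆ c = 0 := by
  obtain ⟨n, p, v, hp, rfl⟩ := exists_sum_lie_eq_of_mem_span hc
  obtain ⟨s, hsS, hunit⟩ :=
    hD.exists_finset_isUnit_sum_projLieLie_sq hproj hker hBad hBsymm hBW hWpos hleast
  have hab : ⁅a, b⁆ ∈ H := hD.lie_mem_H a (hD.Zstar_le ha) b (hD.Zstar_le hb)
  let φ : Module.End 𝕜 W →+ 𝕜 :=
    { toFun := fun T => ∑ i, B (v i) (T (hproj.codRestrict ⁅⁅a, b⁆, p i⁆))
      map_zero' := by simp
      map_add' := fun S T => by simp [Finset.sum_add_distrib] }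
  have hφ : φ 1 = 0 := by
    refine map_one_eq_zero_of_isUnit_sum_mul_self ?_ hsS hunit φ ?_
    · rintro _ ⟨a, ha, b, hb, rfl⟩ _ ⟨d, hd, e, he, rfl⟩
      exact (hD.commute_projLieLie hproj hker hd he ha hb).eq
    · rintro T hT _ ⟨x, hx, y, hy, rfl⟩
      exact hD.sum_bilin_projLieLie_eq_zero hproj hker hBad hBsymm hBW hp v hcZ hab T
        (fun a ha b hb => (hT _ ⟨a, ha, b, hb, rfl⟩).symm) hx hy
  calc B ⁅a, b⁆ (∑ i, ⁅p i, (v i : L)⁆) = ∑ i, B (v i) ⁅⁅a, b⁆, p i⁆ := by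
        rw [map_sum]
        exact Finset.sum_congr rfl fun i _ => by rw [← hBad, hBsymm]
    _ = φ 1 := Finset.sum_congr rfl fun i _ =>
        (hproj.bilin_apply_map_eq hker hBW (hD.lie_H_Zstar _ hab _ (hp i)) (v i).2).symm
    _ = 0 := hφ

end IsAdaptedDecomposition

theorem holonomy_abelian_of_least_nilpotent_general
    (L : Type*) [LieRing L] [LieAlgebra ℝ L] [FiniteDimensional ℝ L]
    (σ : L →ₗ⁅ℝ⁆ L)
    (H M : Submodule ℝ L)
    (hH : ∀ x, x ∈ H ↔ σ x = x)
    (hM : ∀ x, x ∈ M ↔ σ x = -x)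
    (hcompl : IsCompl H M)
    (hHspan : H = Submodule.span ℝ {z : L | ∃ x ∈ M, ∃ y ∈ M, ⁅x, y⁆ = z})
    (B : LinearMap.BilinForm ℝ L)
    (hBnd : B.Nondegenerate)
    (hBsymm : ∀ x y : L, B x y = B y x)
    (hBσ : ∀ x y : L, B (σ x) (σ y) = B x y)
    (hBad : ∀ x y z : L, B ⁅x, y⁆ z = B x ⁅y, z⁆)
    -- adapted decomposition m = z ⊕ W ⊕ z* with maximal center
    (W Zstar : Submodule ℝ L)
    (hsum : (LieAlgebra.center ℝ L).toSubmodule ⊔ W ⊔ Zstar = M)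
    (hWZ : ∀ w ∈ W, ∀ z ∈ LieAlgebra.center ℝ L, B w z = 0)
    (hWpos : ∀ w ∈ W, w ≠ 0 → 0 < B w w)
    (hpair₁ : ∀ a ∈ LieAlgebra.center ℝ L, (∀ b ∈ Zstar, B a b = 0) → a = 0)
    (hbr₁ : ∀ h ∈ H, ∀ x ∈ (LieAlgebra.center ℝ L).toSubmodule ⊔ W,
      ⁅h, x⁆ ∈ (LieAlgebra.center ℝ L).toSubmodule)
    (hbr₂ : ∀ h ∈ H, ∀ x ∈ Zstar,
      ⁅h, x⁆ ∈ (LieAlgebra.center ℝ L).toSubmodule ⊔ W)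
    -- pr_W : projection of m onto W along z ⊕ z*
    (prW : L →ₗ[ℝ] L)
    (hprW₁ : ∀ x : L, prW x ∈ W)
    (hprW₂ : ∀ w ∈ W, prW w = w)
    (hprW₃ : ∀ z ∈ LieAlgebra.center ℝ L, prW z = 0)
    -- least nilpotent
    (hleast : ∀ w ∈ W, (∀ a ∈ Zstar, ∀ b ∈ Zstar, prW ⁅a, ⁅b, w⁆⁆ = 0) → w = 0) :
    ∀ h₁ ∈ H, ∀ h₂ ∈ H, ⁅h₁, h₂⁆ = (0 : L) := by
  intro h₁ hh₁ h₂ hh₂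
  have hD : IsAdaptedDecomposition H M (LieAlgebra.center ℝ L).toSubmodule W Zstar :=
    ⟨fun z hz => (LieModule.mem_maxTrivSubmodule ℝ L L z).1 hz, fun x hx y hy =>
      (hH _).2 (σ.map_lie_eq_self_of_map_eq_neg ((hM x).1 hx) ((hM y).1 hy)), hsum, hbr₁, hbr₂⟩
  have hBHM : ∀ h ∈ H, ∀ m ∈ M, B h m = 0 := fun h hh m hm =>
    LinearMap.BilinForm.apply_eq_zero_of_map_eq_self_of_map_eq_neg hBσ ((hH h).1 hh) ((hM m).1 hm)
  have hWW : ∀ w ∈ W, ∀ w' ∈ W, ⁅w, w'⁆ = 0 := fun w hw w' hw' =>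
    hD.lie_eq_zero_of_mem_W hBnd.1 hcompl.sup_eq_top hBHM hBad hWZ hw hw'
  have hcH : ⁅h₁, h₂⁆ ∈ H := (hH _).2 (by rw [LieHom.map_lie, (hH h₁).1 hh₁, (hH h₂).1 hh₂])
  have hcZ : ∀ x ∈ Zstar, ⁅⁅h₁, h₂⁆, x⁆ ∈ LieAlgebra.center ℝ L := fun x hx =>
    hD.lie_lie_lie_mem hh₁ hh₂ hx
  have horth : ∀ a ∈ Zstar, ∀ b ∈ Zstar, B ⁅a, b⁆ ⁅h₁, h₂⁆ = 0 := fun a ha b hb =>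
    hD.bilin_lie_eq_zero_of_mem_span ⟨hprW₁, hprW₂⟩ hprW₃ hBad hBsymm hWZ hWpos hleast
      (hD.lie_mem_span_of_mem_H hWW hHspan.le hh₁ hh₂) hcZ ha hb
  refine eq_zero_of_mem_of_forall_lie_eq_zero hBnd.1 hcompl.sup_eq_top hHspan.le hBHM hBad hcH
    fun x hx => ?_
  obtain ⟨u, hu, a, ha, rfl⟩ := Submodule.mem_sup.1 (hsum ▸ hx)
  rw [lie_add, hD.lie_lie_lie_eq_zero hh₁ hh₂ hu, zero_add]
  exact hpair₁ _ (hcZ a ha) fun b hb => by rw [hBad, hBsymm, horth a ha b hb]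

/-- A least nilpotent indecomposable solvable symmetric triple with maximal
center has abelian holonomy algebra `h`. -/
theorem holonomy_abelian_of_least_nilpotent
    (L : Type*) [LieRing L] [LieAlgebra ℝ L] [FiniteDimensional ℝ L]
    [LieAlgebra.IsSolvable L]
    (σ : L →ₗ⁅ℝ⁆ L) (hσ : ∀ x, σ (σ x) = x)
    (H M : Submodule ℝ L)
    (hH : ∀ x, x ∈ H ↔ σ x = x)
    (hM : ∀ x, x ∈ M ↔ σ x = -x)
    (hcompl : IsCompl H M)
    (hHspan : H = Submodule.span ℝ {z : L | ∃ x ∈ M, ∃ y ∈ M, ⁅x, y⁆ = z})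
    (B : LinearMap.BilinForm ℝ L)
    (hBnd : B.Nondegenerate)
    (hBsymm : ∀ x y : L, B x y = B y x)
    (hBσ : ∀ x y : L, B (σ x) (σ y) = B x y)
    (hBad : ∀ x y z : L, B ⁅x, y⁆ z = B x ⁅y, z⁆)
    (hindec : ∀ m' : Submodule ℝ L, m' ≤ M →
      (∀ h ∈ H, ∀ x ∈ m', ⁅h, x⁆ ∈ m') →
      (∀ x ∈ m', (∀ y ∈ m', B x y = 0) → x = 0) →
      m' = ⊥ ∨ m' = M)
    -- adapted decomposition m = z ⊕ W ⊕ z* with maximal center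
    (W Zstar : Submodule ℝ L)
    (hWM : W ≤ M) (hZstarM : Zstar ≤ M)
    (hdisj₁ : Disjoint (LieAlgebra.center ℝ L).toSubmodule W)
    (hdisj₂ : Disjoint ((LieAlgebra.center ℝ L).toSubmodule ⊔ W) Zstar)
    (hsum : (LieAlgebra.center ℝ L).toSubmodule ⊔ W ⊔ Zstar = M)
    (hZiso : ∀ x ∈ LieAlgebra.center ℝ L, ∀ y ∈ LieAlgebra.center ℝ L, B x y = 0)
    (hZstariso : ∀ x ∈ Zstar, ∀ y ∈ Zstar, B x y = 0)
    (hWZ : ∀ w ∈ W, ∀ z ∈ LieAlgebra.center ℝ L, B w z = 0)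
    (hWZstar : ∀ w ∈ W, ∀ a ∈ Zstar, B w a = 0)
    (hWpos : ∀ w ∈ W, w ≠ 0 → 0 < B w w)
    (hpair₁ : ∀ a ∈ LieAlgebra.center ℝ L, (∀ b ∈ Zstar, B a b = 0) → a = 0)
    (hpair₂ : ∀ b ∈ Zstar, (∀ a ∈ LieAlgebra.center ℝ L, B a b = 0) → b = 0)
    (hbr₁ : ∀ h ∈ H, ∀ x ∈ (LieAlgebra.center ℝ L).toSubmodule ⊔ W,
      ⁅h, x⁆ ∈ (LieAlgebra.center ℝ L).toSubmodule)
    (hbr₂ : ∀ h ∈ H, ∀ x ∈ Zstar,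
      ⁅h, x⁆ ∈ (LieAlgebra.center ℝ L).toSubmodule ⊔ W)
    -- pr_W : projection of m onto W along z ⊕ z*
    (prW : L →ₗ[ℝ] L)
    (hprW₁ : ∀ x : L, prW x ∈ W)
    (hprW₂ : ∀ w ∈ W, prW w = w)
    (hprW₃ : ∀ z ∈ LieAlgebra.center ℝ L, prW z = 0)
    (hprW₄ : ∀ a ∈ Zstar, prW a = 0)
    -- least nilpotent
    (hleast : ∀ w ∈ W, (∀ a ∈ Zstar, ∀ b ∈ Zstar, prW ⁅a, ⁅b, w⁆⁆ = 0) → w = 0) :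
    ∀ h₁ ∈ H, ∀ h₂ ∈ H, ⁅h₁, h₂⁆ = (0 : L) :=
  holonomy_abelian_of_least_nilpotent_general L σ H M hH hM hcompl hHspan B hBnd hBsymm hBσ hBad W
    Zstar hsum hWZ hWpos hpair₁ hbr₁ hbr₂ prW hprW₁ hprW₂ hprW₃ hleast
end

section
/- Let (g,σ,B) be a solvable symmetric triple with g = h ⊕ m whose center z(g) is one-dimensional. Then the triple is indecomposable: m contains no proper nonzero subspace that is invariant under ad(h) and on which B restricts nondegenerately. -/
/-!
Split `𝔪 = 𝔪₁ ⊕ 𝔪₂` with `𝔪₂` the `B`-orthogonal of `𝔪₁` in `𝔪`. Both pieces are `ad 𝔥`-invariant,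
and invariance of `B` together with `𝔥 ⊥ 𝔪` forces `[𝔪₁, 𝔪₂] = 0`. If `[𝔥, 𝔪ᵢ] = 𝔪ᵢ`, then since
`𝔥 = [𝔪, 𝔪]` we get `𝔪ᵢ = [[𝔪ᵢ, 𝔪ᵢ], 𝔪ᵢ]`, which lies in every term of the derived series, so
`𝔪ᵢ = 0` by solvability. Otherwise the `B`-orthogonal of `[𝔥, 𝔪ᵢ]` in `𝔪ᵢ` is nonzero, and its
elements are orthogonal to `[𝔤, 𝔤]`, hence central. A one-dimensional center cannot meet both
`𝔪₁` and `𝔪₂`, so one of them is zero.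
-/

open LieAlgebra Module Submodule
open LinearMap (BilinForm)

section LinearAlgebra

variable {K V : Type*} [Field K] [AddCommGroup V] [Module K V] [FiniteDimensional K V]

theorem Submodule.disjoint_or_disjoint_of_finrank_eq_one {Z P Q : Submodule K V}
    (hZ : finrank K Z = 1) (hPQ : Disjoint P Q) : Disjoint Z P ∨ Disjoint Z Q := by
  have hsum := finrank_sup_add_finrank_inf_eq (Z ⊓ P) (Z ⊓ Q)
  rw [(hPQ.mono inf_le_right inf_le_right).eq_bot, finrank_bot, add_zero] at hsum
  have hle := finrank_mono (sup_le inf_le_left inf_le_left : Z ⊓ P ⊔ Z ⊓ Q ≤ Z)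
  simp only [disjoint_iff, ← Submodule.finrank_eq_zero]
  omega

theorem LinearMap.BilinForm.exists_ne_zero_mem_orthogonal_of_lt {B : BilinForm K V}
    (hB : B.Nondegenerate) {W U : Submodule K V} (hWU : W < U) :
    ∃ z ∈ U, z ≠ 0 ∧ z ∈ B.orthogonal W := by
  have hsum := finrank_sup_add_finrank_inf_eq U (B.orthogonal W)
  have hWU' := finrank_lt_finrank_of_lt hWU
  have hsupV := finrank_le (U ⊔ B.orthogonal W)
  have hWV := finrank_le W
  rw [finrank_orthogonal hB] at hsum
  have hne : U ⊓ B.orthogonal W ≠ ⊥ := by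
    rw [Ne, ← Submodule.finrank_eq_zero]
    omega
  obtain ⟨z, hz, hz0⟩ := exists_mem_ne_zero_of_ne_bot hne
  exact ⟨z, (mem_inf.1 hz).1, hz0, (mem_inf.1 hz).2⟩

end LinearAlgebra

section LieAlgebra

variable {K L : Type*} [Field K] [LieRing L] [LieAlgebra K L]

theorem LieAlgebra.eq_bot_of_le_span_lie_lie [IsSolvable L] {V : Submodule K L}
    (hV : V ≤ span K {z | ∃ a ∈ V, ∃ b ∈ V, ∃ c ∈ V, ⁅⁅a, b⁆, c⁆ = z}) : V = ⊥ := by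
  have hle : ∀ k, ∀ x ∈ V, x ∈ derivedSeries K L k := by
    intro k
    induction k with
    | zero => simp [derivedSeries_def, derivedSeriesOfIdeal_zero]
    | succ k ih =>
      refine fun x hx => span_le.2 ?_ (hV hx)
      rintro _ ⟨a, -, b, hb, c, hc, rfl⟩
      rw [SetLike.mem_coe, derivedSeries_def, derivedSeriesOfIdeal_succ]
      exact LieSubmodule.lie_mem_lie ((derivedSeries K L k).lie_mem (ih b hb)) (ih c hc)
  obtain ⟨k, hk⟩ := IsSolvable.solvable K L
  exact eq_bot_iff.2 fun x hx => by simpa [hk] using hle k x hx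

theorem LieAlgebra.span_lie_le_span_lie_lie {H M m₁ m₂ : Submodule K L}
    (hHspan : H ≤ span K {z | ∃ x ∈ M, ∃ y ∈ M, ⁅x, y⁆ = z}) (hsup : m₁ ⊔ m₂ = M)
    (hcomm : ∀ x ∈ m₁, ∀ y ∈ m₂, ⁅x, y⁆ = 0) :
    span K {z | ∃ h ∈ H, ∃ u ∈ m₁, ⁅h, u⁆ = z} ≤
      span K {z | ∃ a ∈ m₁, ∃ b ∈ m₁, ∃ c ∈ m₁, ⁅⁅a, b⁆, c⁆ = z} := by
  have hcomm' : ∀ y ∈ m₂, ∀ x ∈ m₁, ⁅y, x⁆ = 0 := fun y hy x hx => by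
    rw [← lie_skew, hcomm x hx y hy, neg_zero]
  refine span_le.2 ?_
  rintro _ ⟨h, hh, u, hu, rfl⟩
  have hh' := hHspan hh
  clear hh
  induction hh' using span_induction with
  | mem x hx =>
    obtain ⟨a, ha, b, hb, rfl⟩ := hx
    obtain ⟨a₁, ha₁, a₂, ha₂, rfl⟩ := mem_sup.1 (hsup ▸ ha)
    obtain ⟨b₁, hb₁, b₂, hb₂, rfl⟩ := mem_sup.1 (hsup ▸ hb)
    have h₂₂ : ⁅⁅a₂, b₂⁆, u⁆ = 0 := by
      rw [lie_lie, hcomm' _ hb₂ _ hu, hcomm' _ ha₂ _ hu, lie_zero, lie_zero, sub_zero]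
    rw [add_lie, lie_add, lie_add, hcomm _ ha₁ _ hb₂, hcomm' _ ha₂ _ hb₁, add_zero, zero_add,
      add_lie, h₂₂, add_zero]
    exact subset_span ⟨a₁, ha₁, b₁, hb₁, u, hu, rfl⟩
  | zero => simp
  | add x y _ _ hx hy => rw [add_lie]; exact add_mem hx hy
  | smul a x _ hx => rw [smul_lie]; exact smul_mem _ a hx

theorem LieAlgebra.mem_center_of_forall_apply_lie_eq_zero {B : BilinForm K L}
    (hB : B.SeparatingLeft) (hBad : ∀ x y z : L, B ⁅x, y⁆ z = B x ⁅y, z⁆) {z : L}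
    (hz : ∀ x y : L, B z ⁅x, y⁆ = 0) : z ∈ center K L := by
  refine (LieModule.mem_maxTrivSubmodule K L L z).2 fun x => ?_
  rw [← lie_skew, neg_eq_zero]
  exact hB _ fun y => by rw [hBad, hz]

structure IsSymmetricDecomposition (B : BilinForm K L) (H M : Submodule K L) : Prop where
  sup_eq_top : H ⊔ M = ⊤
  lie_H_H : ∀ h ∈ H, ∀ h' ∈ H, ⁅h, h'⁆ ∈ H
  lie_H_M : ∀ h ∈ H, ∀ x ∈ M, ⁅h, x⁆ ∈ M
  lie_M_M : ∀ x ∈ M, ∀ y ∈ M, ⁅x, y⁆ ∈ H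
  orthogonal : ∀ x ∈ M, ∀ h ∈ H, B x h = 0

namespace IsSymmetricDecomposition

variable {B : BilinForm K L} {H M : Submodule K L}

theorem of_eigenspaces [CharZero K] (σ : L →ₗ⁅K⁆ L) (hH : ∀ x, x ∈ H ↔ σ x = x)
    (hM : ∀ x, x ∈ M ↔ σ x = -x) (hsup : H ⊔ M = ⊤) (hBσ : ∀ x y, B (σ x) (σ y) = B x y) :
    IsSymmetricDecomposition B H M where
  sup_eq_top := hsup
  lie_H_H h hh h' hh' := by rw [hH, σ.map_lie, (hH h).1 hh, (hH h').1 hh']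
  lie_H_M h hh x hx := by rw [hM, σ.map_lie, (hH h).1 hh, (hM x).1 hx, lie_neg]
  lie_M_M x hx y hy := by
    rw [hH, σ.map_lie, (hM x).1 hx, (hM y).1 hy, neg_lie, lie_neg, neg_neg]
  orthogonal x hx h hh := by
    have hσxh := hBσ x h
    rwa [(hM x).1 hx, (hH h).1 hh, map_neg, LinearMap.neg_apply, eq_comm,
      CharZero.eq_neg_self_iff] at hσxh

theorem mem_center_of_forall_apply_lie_eq_zero (hd : IsSymmetricDecomposition B H M)
    (hB : B.SeparatingLeft) (hBad : ∀ x y z : L, B ⁅x, y⁆ z = B x ⁅y, z⁆) {z : L}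
    (hzM : z ∈ M) (hz : ∀ h ∈ H, ∀ y ∈ M, B z ⁅h, y⁆ = 0) : z ∈ center K L := by
  refine LieAlgebra.mem_center_of_forall_apply_lie_eq_zero hB hBad fun x y => ?_
  obtain ⟨x₁, hx₁, x₂, hx₂, rfl⟩ := mem_sup.1 (hd.sup_eq_top ▸ mem_top : x ∈ H ⊔ M)
  obtain ⟨y₁, hy₁, y₂, hy₂, rfl⟩ := mem_sup.1 (hd.sup_eq_top ▸ mem_top : y ∈ H ⊔ M)
  rw [add_lie, lie_add, lie_add, ← lie_skew x₂ y₁]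
  simp only [map_add, map_neg, hd.orthogonal z hzM _ (hd.lie_H_H _ hx₁ _ hy₁), hz _ hx₁ _ hy₂,
    hz _ hy₁ _ hx₂, hd.orthogonal z hzM _ (hd.lie_M_M _ hx₂ _ hy₂), neg_zero, add_zero]

theorem lie_eq_zero_of_orthogonal (hd : IsSymmetricDecomposition B H M) (hB : B.SeparatingLeft)
    (hBad : ∀ x y z : L, B ⁅x, y⁆ z = B x ⁅y, z⁆) {m₁ m₂ : Submodule K L} (hm₁ : m₁ ≤ M)
    (hm₂ : m₂ ≤ M) (hinv₂ : ∀ h ∈ H, ∀ y ∈ m₂, ⁅h, y⁆ ∈ m₂)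
    (horth : ∀ x ∈ m₁, ∀ y ∈ m₂, B x y = 0) {x y : L} (hx : x ∈ m₁) (hy : y ∈ m₂) :
    ⁅x, y⁆ = 0 := by
  refine hB _ fun z => ?_
  obtain ⟨z₁, hz₁, z₂, hz₂, rfl⟩ := mem_sup.1 (hd.sup_eq_top ▸ mem_top : z ∈ H ⊔ M)
  rw [map_add, hBad, hBad, ← lie_skew y z₁, map_neg, horth x hx _ (hinv₂ _ hz₁ _ hy),
    hd.orthogonal x (hm₁ hx) _ (hd.lie_M_M _ (hm₂ hy) _ hz₂), neg_zero, add_zero]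

theorem lie_mem_orthogonal_inf (hd : IsSymmetricDecomposition B H M)
    (hBad : ∀ x y z : L, B ⁅x, y⁆ z = B x ⁅y, z⁆) {m : Submodule K L}
    (hinv : ∀ h ∈ H, ∀ x ∈ m, ⁅h, x⁆ ∈ m) {h x : L} (hh : h ∈ H)
    (hx : x ∈ B.orthogonal m ⊓ M) : ⁅h, x⁆ ∈ B.orthogonal m ⊓ M := by
  refine ⟨fun n hn => ?_, hd.lie_H_M h hh x hx.2⟩
  change B n ⁅h, x⁆ = 0
  rw [← hBad, ← lie_skew, map_neg, LinearMap.neg_apply, hx.1 _ (hinv h hh n hn), neg_zero]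

theorem eq_bot_of_disjoint_center [FiniteDimensional K L] [IsSolvable L]
    (hd : IsSymmetricDecomposition B H M) (hB : B.Nondegenerate)
    (hBsymm : ∀ x y : L, B x y = B y x) (hBad : ∀ x y z : L, B ⁅x, y⁆ z = B x ⁅y, z⁆)
    (hHspan : H ≤ span K {z | ∃ x ∈ M, ∃ y ∈ M, ⁅x, y⁆ = z}) {m₁ m₂ : Submodule K L}
    (hsup : m₁ ⊔ m₂ = M) (hinv₁ : ∀ h ∈ H, ∀ x ∈ m₁, ⁅h, x⁆ ∈ m₁)
    (hinv₂ : ∀ h ∈ H, ∀ y ∈ m₂, ⁅h, y⁆ ∈ m₂) (horth : ∀ x ∈ m₁, ∀ y ∈ m₂, B x y = 0)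
    (hcenter : Disjoint (center K L).toSubmodule m₁) : m₁ = ⊥ := by
  have hm₁ : m₁ ≤ M := hsup ▸ le_sup_left
  have hm₂ : m₂ ≤ M := hsup ▸ le_sup_right
  refine eq_bot_of_le_span_lie_lie <| le_trans ?_ <| span_lie_le_span_lie_lie hHspan hsup
    fun x hx y hy => hd.lie_eq_zero_of_orthogonal hB.1 hBad hm₁ hm₂ hinv₂ horth hx hy
  set W := span K {z | ∃ h ∈ H, ∃ u ∈ m₁, ⁅h, u⁆ = z}
  have hW : W ≤ m₁ := span_le.2 <| by
    rintro _ ⟨h, hh, u, hu, rfl⟩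
    exact hinv₁ h hh u hu
  by_contra hm₁W
  obtain ⟨z, hz, hz0, hzW⟩ :=
    BilinForm.exists_ne_zero_mem_orthogonal_of_lt hB (lt_of_le_not_ge hW hm₁W)
  have hzc : z ∈ center K L := hd.mem_center_of_forall_apply_lie_eq_zero hB.1 hBad (hm₁ hz)
    fun h hh y hy => by
      obtain ⟨y₁, hy₁, y₂, hy₂, rfl⟩ := mem_sup.1 (hsup ▸ hy)
      rw [lie_add, map_add, hBsymm, hzW _ (subset_span ⟨h, hh, y₁, hy₁, rfl⟩),
        horth z hz _ (hinv₂ h hh y₂ hy₂), add_zero]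
  exact hz0 (disjoint_def.1 hcenter z hzc hz)

end IsSymmetricDecomposition

end LieAlgebra

theorem indecomposable_of_one_dim_center_general
    (L : Type*) [LieRing L] [LieAlgebra ℝ L] [FiniteDimensional ℝ L]
    [LieAlgebra.IsSolvable L]
    (σ : L →ₗ⁅ℝ⁆ L)
    (H M : Submodule ℝ L)
    (hH : ∀ x, x ∈ H ↔ σ x = x)
    (hM : ∀ x, x ∈ M ↔ σ x = -x)
    (hcompl : IsCompl H M)
    (hHspan : H = Submodule.span ℝ {z : L | ∃ x ∈ M, ∃ y ∈ M, ⁅x, y⁆ = z})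
    (B : LinearMap.BilinForm ℝ L)
    (hBnd : B.Nondegenerate)
    (hBsymm : ∀ x y : L, B x y = B y x)
    (hBσ : ∀ x y : L, B (σ x) (σ y) = B x y)
    (hBad : ∀ x y z : L, B ⁅x, y⁆ z = B x ⁅y, z⁆)
    (hcenter : Module.finrank ℝ (LieAlgebra.center ℝ L).toSubmodule = 1) :
    ∀ m' : Submodule ℝ L, m' ≤ M →
      (∀ h ∈ H, ∀ x ∈ m', ⁅h, x⁆ ∈ m') →
      (∀ x ∈ m', (∀ y ∈ m', B x y = 0) → x = 0) →
      m' = ⊥ ∨ m' = M := by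
  intro m' hm'M hinv hnd
  have hd : IsSymmetricDecomposition B H M := .of_eigenspaces σ hH hM hcompl.sup_eq_top hBσ
  have hdisj : Disjoint m' (B.orthogonal m') :=
    disjoint_def.2 fun x hx hx' => hnd x hx fun y hy => hBsymm x y ▸ hx' y hy
  set m₂ := B.orthogonal m' ⊓ M
  have hsup : m' ⊔ m₂ = M := by
    have hrefl : B.IsRefl := fun x y hxy => hBsymm x y ▸ hxy
    rw [← sup_inf_assoc_of_le _ hm'M,
      ((BilinForm.isCompl_orthogonal_iff_disjoint hrefl).2 hdisj).sup_eq_top, top_inf_eq]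
  have horth : ∀ x ∈ m', ∀ y ∈ m₂, B x y = 0 := fun x hx y hy => hy.1 x hx
  have hinv₂ : ∀ h ∈ H, ∀ y ∈ m₂, ⁅h, y⁆ ∈ m₂ := fun h hh y hy =>
    hd.lie_mem_orthogonal_inf hBad hinv hh hy
  rcases disjoint_or_disjoint_of_finrank_eq_one hcenter (hdisj.mono_right inf_le_left)
    with hc | hc
  · exact .inl (hd.eq_bot_of_disjoint_center hBnd hBsymm hBad hHspan.le hsup hinv hinv₂ horth hc)
  · have hm₂ : m₂ = ⊥ := hd.eq_bot_of_disjoint_center hBnd hBsymm hBad hHspan.le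
      (sup_comm m₂ m' ▸ hsup) hinv₂ hinv (fun x hx y hy => hBsymm x y ▸ horth y hy x hx) hc
    exact .inr (by rw [← hsup, hm₂, sup_bot_eq])

/-- A solvable symmetric triple whose center is one-dimensional is
indecomposable. -/
theorem indecomposable_of_one_dim_center
    (L : Type*) [LieRing L] [LieAlgebra ℝ L] [FiniteDimensional ℝ L]
    [LieAlgebra.IsSolvable L]
    (σ : L →ₗ⁅ℝ⁆ L) (hσ : ∀ x, σ (σ x) = x)
    (H M : Submodule ℝ L)
    (hH : ∀ x, x ∈ H ↔ σ x = x)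
    (hM : ∀ x, x ∈ M ↔ σ x = -x)
    (hcompl : IsCompl H M)
    (hHspan : H = Submodule.span ℝ {z : L | ∃ x ∈ M, ∃ y ∈ M, ⁅x, y⁆ = z})
    (B : LinearMap.BilinForm ℝ L)
    (hBnd : B.Nondegenerate)
    (hBsymm : ∀ x y : L, B x y = B y x)
    (hBσ : ∀ x y : L, B (σ x) (σ y) = B x y)
    (hBad : ∀ x y z : L, B ⁅x, y⁆ z = B x ⁅y, z⁆)
    (hcenter : Module.finrank ℝ (LieAlgebra.center ℝ L).toSubmodule = 1) :
    ∀ m' : Submodule ℝ L, m' ≤ M →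
      (∀ h ∈ H, ∀ x ∈ m', ⁅h, x⁆ ∈ m') →
      (∀ x ∈ m', (∀ y ∈ m', B x y = 0) → x = 0) →
      m' = ⊥ ∨ m' = M :=
  indecomposable_of_one_dim_center_general L σ H M hH hM hcompl hHspan B hBnd hBsymm hBσ hBad
    hcenter
end

section
/- Let (g,σ,B) be an indecomposable solvable symmetric triple with g = h ⊕ m, dim m > 1, whose center z := z(g) is one-dimensional, and suppose ⁅h, z^⊥ ∩ m⁆ ⊆ z, where z^⊥ is the B-orthogonal complement of z. Then the holonomy algebra h is abelian (⁅h,h⁆ = 0) and dim h = dim m − 2. -/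
/-!
The centre is spanned by a vector `ζ ∈ 𝔪`: a central element of `𝔥 = [𝔪, 𝔪]` is orthogonal to
`𝔥` and to `𝔪`, and by the grading the `𝔥`-component of a central element is central. It is
isotropic, since otherwise `𝕜 ζ` would be a
nondegenerate `𝔥`-invariant subspace of `𝔪`. Choose `w ∈ 𝔪` with `B(ζ, w) = 1`. For `a ∈ 𝔥` and
`x ∈ ζ^⊥ ∩ 𝔪` the hypothesis and invariance of `B` give `⁅a, x⁆ = B(x, ⁅w, a⁆) ζ`. As
`𝔪 = 𝕜 w ⊕ (ζ^⊥ ∩ 𝔪)` and `𝔥` acts faithfully on `𝔪`, an element `a ∈ 𝔥` vanishes as soon as it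
kills `ζ^⊥ ∩ 𝔪`, which happens when `⁅w, a⁆ = 0` and also when `a` is a bracket in `𝔥` (the
formula shows `⁅𝔥, ζ^⊥ ∩ 𝔪⁆ ⊆ 𝕜 ζ` is central). So `𝔥` is abelian and `a ↦ ⁅w, a⁆` embeds `𝔥`
into `E = {ζ, w}^⊥ ∩ 𝔪`; the pairing `(e, a) ↦ B(e, ⁅w, a⁆)` embeds `E` into `𝔥^*`, hence
`dim 𝔥 = dim E = dim 𝔪 - 2`.
-/

open LieAlgebra LieModule Module Submodule

/-- The paper's symmetric triple `(𝔤, σ, B)`, with the involution `σ` recorded only through its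
eigenspaces `H = 𝔥` and `M = 𝔪` and the relations between them. -/
structure IsSymmetricTriple {𝕜 L : Type*} [Field 𝕜] [LieRing L] [LieAlgebra 𝕜 L]
    (B : LinearMap.BilinForm 𝕜 L) (H M : Submodule 𝕜 L) : Prop where
  isCompl : IsCompl H M
  lie_h_h : ∀ x ∈ H, ∀ y ∈ H, ⁅x, y⁆ ∈ H
  lie_h_m : ∀ x ∈ H, ∀ y ∈ M, ⁅x, y⁆ ∈ M
  lie_m_m : ∀ x ∈ M, ∀ y ∈ M, ⁅x, y⁆ ∈ H
  orthogonal : ∀ x ∈ H, ∀ y ∈ M, B x y = 0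
  h_eq_span : H = span 𝕜 {z | ∃ x ∈ M, ∃ y ∈ M, ⁅x, y⁆ = z}
  nondegenerate : B.Nondegenerate
  symm : ∀ x y, B x y = B y x
  assoc : ∀ x y z, B ⁅x, y⁆ z = B x ⁅y, z⁆

section

variable {𝕜 L : Type*} [Field 𝕜] [LieRing L] [LieAlgebra 𝕜 L] {B : LinearMap.BilinForm 𝕜 L}
  {H M : Submodule 𝕜 L}

theorem IsSymmetricTriple.of_involution [NeZero (2 : 𝕜)] (σ : L →ₗ⁅𝕜⁆ L)
    (hH : ∀ x, x ∈ H ↔ σ x = x) (hM : ∀ x, x ∈ M ↔ σ x = -x) (hcompl : IsCompl H M)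
    (hspan : H = span 𝕜 {z | ∃ x ∈ M, ∃ y ∈ M, ⁅x, y⁆ = z}) (hnd : B.Nondegenerate)
    (hsymm : ∀ x y, B x y = B y x) (hσ : ∀ x y, B (σ x) (σ y) = B x y)
    (hassoc : ∀ x y z, B ⁅x, y⁆ z = B x ⁅y, z⁆) :
    IsSymmetricTriple B H M where
  isCompl := hcompl
  lie_h_h x hx y hy := by rw [hH, LieHom.map_lie, (hH x).1 hx, (hH y).1 hy]
  lie_h_m x hx y hy := by rw [hM, LieHom.map_lie, (hH x).1 hx, (hM y).1 hy, lie_neg]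
  lie_m_m x hx y hy := by
    rw [hH, LieHom.map_lie, (hM x).1 hx, (hM y).1 hy, neg_lie, lie_neg, neg_neg]
  orthogonal x hx y hy := by
    have h := hσ x y
    rw [(hH x).1 hx, (hM y).1 hy, map_neg, neg_eq_iff_add_eq_zero, ← two_mul] at h
    exact (mul_eq_zero.1 h).resolve_left two_ne_zero
  h_eq_span := hspan
  nondegenerate := hnd
  symm := hsymm
  assoc := hassoc

theorem apply_lie_self_eq_zero (hassoc : ∀ x y z, B ⁅x, y⁆ z = B x ⁅y, z⁆) (x y : L) :
    B x ⁅y, x⁆ = 0 := by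
  rw [← hassoc, ← lie_skew, map_neg, LinearMap.neg_apply, hassoc, lie_self, map_zero, neg_zero]

end

theorem finrank_inf_ker_inf_ker_add_two {𝕜 V : Type*} [Field 𝕜] [AddCommGroup V] [Module 𝕜 V]
    (M : Submodule 𝕜 V) [FiniteDimensional 𝕜 M] (f g : V →ₗ[𝕜] 𝕜) {u v : V} (hu : u ∈ M)
    (hv : v ∈ M) (hfu : f u = 0) (hgu : g u = 1) (hfv : f v = 1) :
    finrank 𝕜 ↥(M ⊓ LinearMap.ker f ⊓ LinearMap.ker g) + 2 = finrank 𝕜 M := by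
  let ψ : M →ₗ[𝕜] 𝕜 × 𝕜 := (f.prod g).comp M.subtype
  have hker : LinearMap.ker ψ = (M ⊓ LinearMap.ker f ⊓ LinearMap.ker g).comap M.subtype := by
    ext x
    simp [ψ]
  have hsurj : Function.Surjective ψ := by
    rintro ⟨a, b⟩
    refine ⟨a • ⟨v, hv⟩ + (b - a * g v) • ⟨u, hu⟩, ?_⟩
    simp [ψ, hfu, hgu, hfv]
  have hrank := LinearMap.finrank_range_add_finrank_ker ψ
  rw [LinearMap.range_eq_top.2 hsurj, finrank_top, Module.finrank_prod, Module.finrank_self, hker,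
    (comapSubtypeEquivOfLe (inf_le_left.trans inf_le_left)).finrank_eq] at hrank
  omega

namespace IsSymmetricTriple

variable {𝕜 L : Type*} [Field 𝕜] [LieRing L] [LieAlgebra 𝕜 L] {B : LinearMap.BilinForm 𝕜 L}
  {H M : Submodule 𝕜 L}

theorem lie_m_h (hT : IsSymmetricTriple B H M) {x a : L} (hx : x ∈ M) (ha : a ∈ H) :
    ⁅x, a⁆ ∈ M := by
  rw [← lie_skew]
  exact neg_mem (hT.lie_h_m a ha x hx)

theorem exists_add_eq (hT : IsSymmetricTriple B H M) (v : L) :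
    ∃ h ∈ H, ∃ m ∈ M, h + m = v :=
  mem_sup.1 (hT.isCompl.sup_eq_top ▸ mem_top)

theorem h_le_ker (hT : IsSymmetricTriple B H M) {N : Type*} [AddCommGroup N] [Module 𝕜 N]
    (f : L →ₗ[𝕜] N) (hf : ∀ x ∈ M, ∀ y ∈ M, f ⁅x, y⁆ = 0) : H ≤ LinearMap.ker f := by
  rw [hT.h_eq_span, span_le]
  rintro _ ⟨x, hx, y, hy, rfl⟩
  exact hf x hx y hy

theorem eq_zero_of_orthogonal (hT : IsSymmetricTriple B H M) {x : L}
    (hxH : ∀ y ∈ H, B x y = 0) (hxM : ∀ y ∈ M, B x y = 0) : x = 0 := by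
  refine hT.nondegenerate.1 x fun v => ?_
  obtain ⟨h, hh, m, hm, rfl⟩ := hT.exists_add_eq v
  rw [map_add, hxH h hh, hxM m hm, add_zero]

theorem eq_zero_of_mem_h_of_orthogonal_h (hT : IsSymmetricTriple B H M) {x : L} (hx : x ∈ H)
    (hxH : ∀ y ∈ H, B x y = 0) : x = 0 :=
  hT.eq_zero_of_orthogonal hxH (hT.orthogonal x hx)

theorem eq_zero_of_mem_m_of_orthogonal_m (hT : IsSymmetricTriple B H M) {x : L} (hx : x ∈ M)
    (hxM : ∀ y ∈ M, B x y = 0) : x = 0 :=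
  hT.eq_zero_of_orthogonal (fun y hy => hT.symm x y ▸ hT.orthogonal y hy x hx) hxM

theorem eq_zero_of_mem_h_of_mem_center (hT : IsSymmetricTriple B H M) {a : L} (ha : a ∈ H)
    (hc : a ∈ center 𝕜 L) : a = 0 := by
  refine hT.eq_zero_of_mem_h_of_orthogonal_h ha fun y hy => hT.h_le_ker (B a) (fun x _ z _ => ?_) hy
  rw [← hT.assoc, ← lie_skew, (mem_maxTrivSubmodule 𝕜 L L a).1 hc, neg_zero,
    map_zero, LinearMap.zero_apply]

theorem mem_center_of_lie_m_eq_zero (hT : IsSymmetricTriple B H M) {a : L}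
    (haM : ∀ x ∈ M, ⁅a, x⁆ = 0) : a ∈ center 𝕜 L := by
  have haH : H ≤ LinearMap.ker (ad 𝕜 L a) := hT.h_le_ker _ fun x hx y hy => by
    rw [ad_apply, leibniz_lie, haM x hx, haM y hy, zero_lie, lie_zero, add_zero]
  refine (mem_maxTrivSubmodule 𝕜 L L a).2 fun v => ?_
  obtain ⟨h, hh, m, hm, rfl⟩ := hT.exists_add_eq v
  rw [add_lie, ← lie_skew h, ← lie_skew m, ← ad_apply 𝕜, haH hh, haM m hm, neg_zero, add_zero]

theorem eq_zero_of_mem_h_of_lie_m_eq_zero (hT : IsSymmetricTriple B H M) {a : L} (ha : a ∈ H)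
    (haM : ∀ x ∈ M, ⁅a, x⁆ = 0) : a = 0 :=
  hT.eq_zero_of_mem_h_of_mem_center ha (hT.mem_center_of_lie_m_eq_zero haM)

theorem mem_center_of_mem_m (hT : IsSymmetricTriple B H M) {e : L} (he : e ∈ M)
    (hHe : ∀ b ∈ H, ⁅b, e⁆ = 0) : e ∈ center 𝕜 L := by
  have hMe : ∀ x ∈ M, ⁅x, e⁆ = 0 := fun x hx =>
    hT.eq_zero_of_mem_h_of_orthogonal_h (hT.lie_m_m x hx e he) fun b hb => by
      rw [hT.assoc, ← lie_skew, hHe b hb, neg_zero, map_zero]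
  refine (mem_maxTrivSubmodule 𝕜 L L e).2 fun v => ?_
  obtain ⟨h, hh, m, hm, rfl⟩ := hT.exists_add_eq v
  rw [add_lie, hHe h hh, hMe m hm, add_zero]

theorem center_le_m (hT : IsSymmetricTriple B H M) : (center 𝕜 L).toSubmodule ≤ M := by
  intro z hz
  obtain ⟨h, hh, m, hm, rfl⟩ := hT.exists_add_eq z
  suffices h = 0 by rwa [this, zero_add]
  refine hT.eq_zero_of_mem_h_of_lie_m_eq_zero hh fun x hx => ?_
  have hxz : ⁅x, h + m⁆ = 0 := (mem_maxTrivSubmodule 𝕜 L L _).1 hz x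
  rw [lie_add, add_eq_zero_iff_eq_neg] at hxz
  have hxh : ⁅x, h⁆ = 0 := disjoint_def.1 hT.isCompl.disjoint _
    (hxz ▸ neg_mem (hT.lie_m_m x hx m hm)) (hT.lie_m_h hx hh)
  rw [← lie_skew, hxh, neg_zero]

theorem apply_self_eq_zero_of_mem_center (hT : IsSymmetricTriple B H M)
    (hindec : ∀ m' : Submodule 𝕜 L, m' ≤ M → (∀ h ∈ H, ∀ x ∈ m', ⁅h, x⁆ ∈ m') →
      (∀ x ∈ m', (∀ y ∈ m', B x y = 0) → x = 0) → m' = ⊥ ∨ m' = M)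
    (hdim : 1 < finrank 𝕜 M) {z : L} (hz : z ∈ center 𝕜 L) : B z z = 0 := by
  by_contra hzz
  have hinv : ∀ h ∈ H, ∀ x ∈ 𝕜 ∙ z, ⁅h, x⁆ ∈ 𝕜 ∙ z := by
    intro h _ x hx
    obtain ⟨c, rfl⟩ := mem_span_singleton.1 hx
    rw [lie_smul, (mem_maxTrivSubmodule 𝕜 L L z).1 hz h, smul_zero]
    exact zero_mem _
  have hnd : ∀ x ∈ 𝕜 ∙ z, (∀ y ∈ 𝕜 ∙ z, B x y = 0) → x = 0 := by
    intro x hx hxz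
    obtain ⟨c, rfl⟩ := mem_span_singleton.1 hx
    have hcz := hxz z (mem_span_singleton_self z)
    rw [map_smul, LinearMap.smul_apply, smul_eq_mul] at hcz
    rw [(mul_eq_zero.1 hcz).resolve_right hzz, zero_smul]
  rcases hindec _ ((span_singleton_le_iff_mem _ _).2 (hT.center_le_m hz)) hinv hnd with hbot | htop
  · exact hzz (by rw [span_singleton_eq_bot.1 hbot, map_zero])
  · have hle := finrank_span_le_card (R := 𝕜) ({z} : Set L)
    rw [htop, Set.toFinset_singleton, Finset.card_singleton] at hle
    omega

theorem exists_apply_eq_one (hT : IsSymmetricTriple B H M) {x : L} (hx : x ∈ M) (hx0 : x ≠ 0) :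
    ∃ w ∈ M, B x w = 1 := by
  obtain ⟨w, hw, hxw⟩ : ∃ w ∈ M, B x w ≠ 0 := by
    by_contra! h
    exact hx0 (hT.eq_zero_of_mem_m_of_orthogonal_m hx h)
  exact ⟨(B x w)⁻¹ • w, smul_mem _ _ hw, by rw [map_smul, smul_eq_mul, inv_mul_cancel₀ hxw]⟩

variable {ζ w : L}

theorem lie_eq_smul_of_apply_eq_zero (hT : IsSymmetricTriple B H M) (hζw : B ζ w = 1)
    (hbr : ∀ a ∈ H, ∀ x ∈ M, B ζ x = 0 → ⁅a, x⁆ ∈ 𝕜 ∙ ζ) {a x : L} (ha : a ∈ H) (hx : x ∈ M)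
    (hζx : B ζ x = 0) : ⁅a, x⁆ = B x ⁅w, a⁆ • ζ := by
  obtain ⟨c, hc⟩ := mem_span_singleton.1 (hbr a ha x hx hζx)
  have hcw : B ⁅a, x⁆ w = c := by
    rw [← hc, map_smul, LinearMap.smul_apply, hζw, smul_eq_mul, mul_one]
  rw [← hc, ← hcw, ← lie_skew, map_neg, LinearMap.neg_apply, hT.assoc, ← lie_skew, map_neg, neg_neg]

theorem eq_zero_of_forall_lie_orthogonal_eq_zero (hT : IsSymmetricTriple B H M) (hw : w ∈ M)
    (hζw : B ζ w = 1) {a : L} (ha : a ∈ H) (haK : ∀ x ∈ M, B ζ x = 0 → ⁅a, x⁆ = 0) : a = 0 := by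
  have haM : ∀ y ∈ M, ⁅a, y⁆ = B ζ y • ⁅a, w⁆ := fun y hy => by
    have h := haK (y - B ζ y • w) (sub_mem hy (smul_mem _ _ hw))
      (by rw [map_sub, map_smul, hζw, smul_eq_mul, mul_one, sub_self])
    rwa [lie_sub, lie_smul, sub_eq_zero] at h
  have haw : ⁅a, w⁆ = 0 := hT.eq_zero_of_mem_m_of_orthogonal_m (hT.lie_h_m a ha w hw) fun y hy => by
    rw [← lie_skew, map_neg, LinearMap.neg_apply, hT.assoc, haM y hy, map_smul,
      apply_lie_self_eq_zero hT.assoc, smul_zero, neg_zero]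
  exact hT.eq_zero_of_mem_h_of_lie_m_eq_zero ha fun y hy => by rw [haM y hy, haw, smul_zero]

theorem eq_zero_of_lie_w_eq_zero (hT : IsSymmetricTriple B H M) (hw : w ∈ M) (hζw : B ζ w = 1)
    (hbr : ∀ a ∈ H, ∀ x ∈ M, B ζ x = 0 → ⁅a, x⁆ ∈ 𝕜 ∙ ζ) {a : L} (ha : a ∈ H)
    (haw : ⁅w, a⁆ = 0) : a = 0 :=
  hT.eq_zero_of_forall_lie_orthogonal_eq_zero hw hζw ha fun x hx hζx => by
    rw [hT.lie_eq_smul_of_apply_eq_zero hζw hbr ha hx hζx, haw, map_zero, zero_smul]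

theorem lie_eq_zero_of_mem_h (hT : IsSymmetricTriple B H M) (hζ : ζ ∈ center 𝕜 L) (hw : w ∈ M)
    (hζw : B ζ w = 1) (hbr : ∀ a ∈ H, ∀ x ∈ M, B ζ x = 0 → ⁅a, x⁆ ∈ 𝕜 ∙ ζ) {a b : L}
    (ha : a ∈ H) (hb : b ∈ H) : ⁅a, b⁆ = 0 :=
  hT.eq_zero_of_forall_lie_orthogonal_eq_zero hw hζw (hT.lie_h_h a ha b hb) fun x hx hζx => by
    rw [lie_lie, hT.lie_eq_smul_of_apply_eq_zero hζw hbr hb hx hζx,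
      hT.lie_eq_smul_of_apply_eq_zero hζw hbr ha hx hζx, lie_smul, lie_smul,
      (mem_maxTrivSubmodule 𝕜 L L ζ).1 hζ, (mem_maxTrivSubmodule 𝕜 L L ζ).1 hζ, smul_zero,
      smul_zero, sub_self]

theorem eq_zero_of_apply_lie_w_eq_zero (hT : IsSymmetricTriple B H M)
    (hZ : (center 𝕜 L).toSubmodule = 𝕜 ∙ ζ) (hζw : B ζ w = 1)
    (hbr : ∀ a ∈ H, ∀ x ∈ M, B ζ x = 0 → ⁅a, x⁆ ∈ 𝕜 ∙ ζ) {e : L} (he : e ∈ M) (hζe : B ζ e = 0)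
    (hwe : B w e = 0) (heH : ∀ b ∈ H, B e ⁅w, b⁆ = 0) : e = 0 := by
  have hc : e ∈ (center 𝕜 L).toSubmodule := hT.mem_center_of_mem_m he fun b hb => by
    rw [hT.lie_eq_smul_of_apply_eq_zero hζw hbr hb he hζe, heH b hb, zero_smul]
  obtain ⟨c, rfl⟩ := mem_span_singleton.1 (hZ ▸ hc)
  rw [map_smul, smul_eq_mul, hT.symm, hζw, mul_one] at hwe
  rw [hwe, zero_smul]

theorem finrank_h_add_two [FiniteDimensional 𝕜 L] (hT : IsSymmetricTriple B H M)
    (hZ : (center 𝕜 L).toSubmodule = 𝕜 ∙ ζ) (hζM : ζ ∈ M) (hζζ : B ζ ζ = 0) (hw : w ∈ M)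
    (hζw : B ζ w = 1) (hbr : ∀ a ∈ H, ∀ x ∈ M, B ζ x = 0 → ⁅a, x⁆ ∈ 𝕜 ∙ ζ) :
    finrank 𝕜 H + 2 = finrank 𝕜 M := by
  have hζ : ζ ∈ center 𝕜 L := by
    rw [← LieSubmodule.mem_toSubmodule, hZ]
    exact mem_span_singleton_self ζ
  set E := M ⊓ LinearMap.ker (B ζ) ⊓ LinearMap.ker (B w)
  let adw : H →ₗ[𝕜] L := (ad 𝕜 L w).comp H.subtype
  have hmaps : ∀ a, adw a ∈ E := fun a =>
    ⟨⟨hT.lie_m_h hw a.2, LinearMap.mem_ker.2 <| by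
      rw [LinearMap.comp_apply, ad_apply, ← hT.assoc, ← lie_skew,
        (mem_maxTrivSubmodule 𝕜 L L ζ).1 hζ, neg_zero, map_zero, LinearMap.zero_apply]⟩,
      LinearMap.mem_ker.2 <| by
        rw [LinearMap.comp_apply, ad_apply, ← hT.assoc, lie_self, map_zero, LinearMap.zero_apply]⟩
  have hinj : Function.Injective (adw.codRestrict E hmaps) := by
    rw [← LinearMap.ker_eq_bot, LinearMap.ker_eq_bot']
    intro a ha
    exact Subtype.ext (hT.eq_zero_of_lie_w_eq_zero hw hζw hbr a.2 (congrArg Subtype.val ha))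
  have hinj_dual : Function.Injective ((B.compl₂ adw).comp E.subtype) := by
    rw [← LinearMap.ker_eq_bot, LinearMap.ker_eq_bot']
    intro e he
    obtain ⟨⟨heM, hζe⟩, hwe⟩ := e.2
    exact Subtype.ext (hT.eq_zero_of_apply_lie_w_eq_zero hZ hζw hbr heM hζe hwe
      fun b hb => LinearMap.congr_fun he ⟨b, hb⟩)
  have hle := LinearMap.finrank_le_finrank_of_injective hinj
  have hge := LinearMap.finrank_le_finrank_of_injective hinj_dual
  rw [Subspace.dual_finrank_eq] at hge
  rw [le_antisymm hle hge]
  exact finrank_inf_ker_inf_ker_add_two M (B ζ) (B w) hζM hw hζζ (hT.symm w ζ ▸ hζw) hζw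

end IsSymmetricTriple

theorem case_III_holonomy_abelian_dim_general
    (L : Type*) [LieRing L] [LieAlgebra ℝ L] [FiniteDimensional ℝ L]
    (σ : L →ₗ⁅ℝ⁆ L)
    (H M : Submodule ℝ L)
    (hH : ∀ x, x ∈ H ↔ σ x = x)
    (hM : ∀ x, x ∈ M ↔ σ x = -x)
    (hcompl : IsCompl H M)
    (hHspan : H = Submodule.span ℝ {z : L | ∃ x ∈ M, ∃ y ∈ M, ⁅x, y⁆ = z})
    (B : LinearMap.BilinForm ℝ L)
    (hBnd : B.Nondegenerate)
    (hBsymm : ∀ x y : L, B x y = B y x)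
    (hBσ : ∀ x y : L, B (σ x) (σ y) = B x y)
    (hBad : ∀ x y z : L, B ⁅x, y⁆ z = B x ⁅y, z⁆)
    (hindec : ∀ m' : Submodule ℝ L, m' ≤ M →
      (∀ h ∈ H, ∀ x ∈ m', ⁅h, x⁆ ∈ m') →
      (∀ x ∈ m', (∀ y ∈ m', B x y = 0) → x = 0) →
      m' = ⊥ ∨ m' = M)
    (hdim : 1 < Module.finrank ℝ M)
    (hcenter : Module.finrank ℝ (LieAlgebra.center ℝ L).toSubmodule = 1)
    -- ⁅h, z^⊥ ∩ m⁆ ⊆ z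
    (hbr : ∀ h ∈ H, ∀ x ∈ B.orthogonal (LieAlgebra.center ℝ L).toSubmodule ⊓ M,
      ⁅h, x⁆ ∈ (LieAlgebra.center ℝ L).toSubmodule) :
    (∀ h₁ ∈ H, ∀ h₂ ∈ H, ⁅h₁, h₂⁆ = (0 : L)) ∧
    Module.finrank ℝ H = Module.finrank ℝ M - 2 := by
  have hT := IsSymmetricTriple.of_involution σ hH hM hcompl hHspan hBnd hBsymm hBσ hBad
  obtain ⟨ζ, hζ, hζ0⟩ := exists_mem_ne_zero_of_ne_bot (p := (center ℝ L).toSubmodule) fun h => by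
    rw [h, finrank_bot] at hcenter
    exact zero_ne_one hcenter
  have hZ := eq_span_singleton_of_mem_of_finrank_eq_one hcenter hζ hζ0
  have hζM := hT.center_le_m hζ
  obtain ⟨w, hw, hζw⟩ := hT.exists_apply_eq_one hζM hζ0
  have hbr' : ∀ a ∈ H, ∀ x ∈ M, B ζ x = 0 → ⁅a, x⁆ ∈ ℝ ∙ ζ := fun a ha x hx hζx => by
    have hxζ : x ∈ B.orthogonal (ℝ ∙ ζ) := LinearMap.BilinForm.mem_orthogonal_iff.2 fun n hn => by
      obtain ⟨c, rfl⟩ := mem_span_singleton.1 hn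
      rw [map_smul, LinearMap.smul_apply, hζx, smul_zero]
    rw [← hZ] at hxζ ⊢
    exact hbr a ha x ⟨hxζ, hx⟩
  refine ⟨fun a ha b hb => hT.lie_eq_zero_of_mem_h hζ hw hζw hbr' ha hb, ?_⟩
  have hζζ := hT.apply_self_eq_zero_of_mem_center hindec hdim hζ
  have := hT.finrank_h_add_two hZ hζM hζζ hw hζw hbr'
  omega

/-- For an indecomposable solvable symmetric triple with one-dimensional
center `z` satisfying `⁅h, z^⊥ ∩ m⁆ ⊆ z`, the holonomy algebra `h` is abelian and
`dim h = dim m − 2`. -/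
theorem case_III_holonomy_abelian_dim
    (L : Type*) [LieRing L] [LieAlgebra ℝ L] [FiniteDimensional ℝ L]
    [LieAlgebra.IsSolvable L]
    (σ : L →ₗ⁅ℝ⁆ L) (hσ : ∀ x, σ (σ x) = x)
    (H M : Submodule ℝ L)
    (hH : ∀ x, x ∈ H ↔ σ x = x)
    (hM : ∀ x, x ∈ M ↔ σ x = -x)
    (hcompl : IsCompl H M)
    (hHspan : H = Submodule.span ℝ {z : L | ∃ x ∈ M, ∃ y ∈ M, ⁅x, y⁆ = z})
    (B : LinearMap.BilinForm ℝ L)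
    (hBnd : B.Nondegenerate)
    (hBsymm : ∀ x y : L, B x y = B y x)
    (hBσ : ∀ x y : L, B (σ x) (σ y) = B x y)
    (hBad : ∀ x y z : L, B ⁅x, y⁆ z = B x ⁅y, z⁆)
    (hindec : ∀ m' : Submodule ℝ L, m' ≤ M →
      (∀ h ∈ H, ∀ x ∈ m', ⁅h, x⁆ ∈ m') →
      (∀ x ∈ m', (∀ y ∈ m', B x y = 0) → x = 0) →
      m' = ⊥ ∨ m' = M)
    (hdim : 1 < Module.finrank ℝ M)
    (hcenter : Module.finrank ℝ (LieAlgebra.center ℝ L).toSubmodule = 1)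
    -- ⁅h, z^⊥ ∩ m⁆ ⊆ z
    (hbr : ∀ h ∈ H, ∀ x ∈ B.orthogonal (LieAlgebra.center ℝ L).toSubmodule ⊓ M,
      ⁅h, x⁆ ∈ (LieAlgebra.center ℝ L).toSubmodule) :
    (∀ h₁ ∈ H, ∀ h₂ ∈ H, ⁅h₁, h₂⁆ = (0 : L)) ∧
    Module.finrank ℝ H = Module.finrank ℝ M - 2 :=
  case_III_holonomy_abelian_dim_general L σ H M hH hM hcompl hHspan B hBnd hBsymm hBσ hBad hindec
    hdim hcenter hbr
end
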